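/- arXiv:2405.15235 — 8 statements merged into one kernel-verified Lean document; each statement's English description precedes it below -/
import Mathlib

section
/- Let L be a Z-graded Lie algebra over a field K of characteristic 0, with all homogeneous components finite-dimensional, and suppose L is finitely generated as a Lie algebra. Then the positive part L⁺ = ⊕_{k>0} L_k is a finitely generated Lie algebra. -/
set_option synthInstance.maxHeartbeats 1000000
set_option maxHeartbeats 2000000


/-- `comp` is a `ℤ`-grading of the Lie algebra `L`: the components are internal
(i.e. `L = ⊕ₙ Lₙ`) and satisfy `⁅Lₙ, Lₘ⁆ ⊆ L_{n+m}`. -/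
def IsZGradedLie (K L : Type*) [Field K] [LieRing L] [LieAlgebra K L]
    (comp : ℤ → Submodule K L) : Prop :=
  DirectSum.IsInternal comp ∧
    ∀ n m : ℤ, ∀ x ∈ comp n, ∀ y ∈ comp m, ⁅x, y⁆ ∈ comp (n + m)

section Aux

open DirectSum

variable {K L : Type*} [Field K] [LieRing L] [LieAlgebra K L]

lemma sum_lie' {ι : Type*} (s : Finset ι) (f : ι → L) (y : L) :
    ⁅∑ i ∈ s, f i, y⁆ = ∑ i ∈ s, ⁅f i, y⁆ := by
  induction s using Finset.cons_induction with
  | empty => simp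
  | cons a s ha ih => simp [Finset.sum_cons, add_lie, ih]

lemma lie_sum' {ι : Type*} (s : Finset ι) (f : ι → L) (y : L) :
    ⁅y, ∑ i ∈ s, f i⁆ = ∑ i ∈ s, ⁅y, f i⁆ := by
  induction s using Finset.cons_induction with
  | empty => simp
  | cons a s ha ih => simp [Finset.sum_cons, lie_add, ih]

variable (comp : ℤ → Submodule K L) [Decomposition comp]

/-- The `e`-th homogeneous component of `x`, as an element of `L`. -/
noncomputable def cpt (e : ℤ) (x : L) : L := (decompose comp x e : L)

lemma cpt_mem (e : ℤ) (x : L) : cpt comp e x ∈ comp e := (decompose comp x e).2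

lemma cpt_add (e : ℤ) (x y : L) :
    cpt comp e (x + y) = cpt comp e x + cpt comp e y := by
  simp [cpt, decompose_add]

lemma cpt_zero (e : ℤ) : cpt comp e (0 : L) = 0 := by
  simp [cpt]

lemma cpt_of_mem_same {e : ℤ} {x : L} (hx : x ∈ comp e) : cpt comp e x = x :=
  decompose_of_mem_same comp hx

lemma cpt_of_mem_ne {i e : ℤ} {x : L} (hx : x ∈ comp i) (h : i ≠ e) :
    cpt comp e x = 0 :=
  decompose_of_mem_ne comp hx h

/-- If every homogeneous component of `x` lies in a submodule `p`, then so does `x`. -/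
lemma mem_of_cpt (x : L) (p : Submodule K L) (h : ∀ e : ℤ, cpt comp e x ∈ p) :
    x ∈ p := by
  classical
  rw [← sum_support_decompose comp x]
  exact Submodule.sum_mem _ fun e _ => h e

/-- `x` written as a finite sum of its components, bracketed with `y`. -/
lemma lie_eq_sum (x y : L) :
    ∃ s : Finset ℤ, ⁅x, y⁆ = ∑ e ∈ s, ⁅cpt comp e x, y⁆ := by
  classical
  refine ⟨(decompose comp x).support, ?_⟩
  conv_lhs => rw [← sum_support_decompose comp x]
  rw [sum_lie']
  rfl

/-- Main computation: a predicate closed under `0` and `+` holds for the `e`-component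
of a bracket provided it holds for all products of components of the two factors in
total degree `e`. -/
lemma cpt_lie (hbr : ∀ n m : ℤ, ∀ x ∈ comp n, ∀ y ∈ comp m, ⁅x, y⁆ ∈ comp (n + m))
    (x y : L) (e : ℤ) (P : L → Prop) (h0 : P 0)
    (hadd : ∀ a b : L, P a → P b → P (a + b))
    (hterm : ∀ i j : ℤ, i + j = e → P ⁅cpt comp i x, cpt comp j y⁆) :
    P (cpt comp e ⁅x, y⁆) := by
  classical
  have hxy : ⁅x, y⁆ = ∑ i ∈ (decompose comp x).support, ∑ j ∈ (decompose comp y).support,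
      ⁅cpt comp i x, cpt comp j y⁆ := by
    conv_lhs => rw [← sum_support_decompose comp x, ← sum_support_decompose comp y]
    rw [sum_lie']
    exact Finset.sum_congr rfl fun i _ => lie_sum' _ _ _
  have key : cpt comp e ⁅x, y⁆ = ∑ i ∈ (decompose comp x).support,
      ∑ j ∈ (decompose comp y).support, cpt comp e ⁅cpt comp i x, cpt comp j y⁆ := by
    rw [cpt, hxy, decompose_sum]
    rw [DFinsupp.finset_sum_apply]
    rw [AddSubmonoidClass.coe_finset_sum]
    refine Finset.sum_congr rfl fun i _ => ?_
    rw [decompose_sum, DFinsupp.finset_sum_apply, AddSubmonoidClass.coe_finset_sum]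
    rfl
  rw [key]
  refine Finset.sum_induction _ P hadd h0 fun i _ => ?_
  refine Finset.sum_induction _ P hadd h0 fun j _ => ?_
  have hm : ⁅cpt comp i x, cpt comp j y⁆ ∈ comp (i + j) :=
    hbr i j _ (cpt_mem comp i x) _ (cpt_mem comp j y)
  by_cases hij : i + j = e
  · rw [hij] at hm
    rw [cpt_of_mem_same comp hm]
    exact hterm i j hij
  · rw [cpt_of_mem_ne comp hm hij]
    exact h0

end Aux

/-- Let `L` be a `ℤ`-graded Lie algebra over a field of characteristic zero with
finite-dimensional homogeneous components, which is finitely generated as a Lie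
algebra.  Then the positive part `L⁺ = ⊕_{k>0} L_k` is a finitely generated Lie
subalgebra: there is a finite set `S` whose generated Lie subalgebra is exactly `L⁺`. -/
theorem positivePart_finitelyGenerated
    (K : Type*) [Field K] [CharZero K]
    (L : Type*) [LieRing L] [LieAlgebra K L]
    (comp : ℤ → Submodule K L) (hgr : IsZGradedLie K L comp)
    (hfd : ∀ n : ℤ, FiniteDimensional K (comp n))
    (hfg : ∃ S : Finset L, LieSubalgebra.lieSpan K L ↑S = ⊤) :
    ∃ S : Finset L,
      ((LieSubalgebra.lieSpan K L ↑S : LieSubalgebra K L) : Set L)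
        = ((⨆ k > (0 : ℤ), comp k : Submodule K L) : Set L) := by
  classical
  obtain ⟨hint, hbr⟩ := hgr
  letI : DirectSum.Decomposition comp := hint.chooseDecomposition
  obtain ⟨T, hT⟩ := hfg
  -- the bound `N` on the (positive) degrees of components of the generators
  set N : ℕ := T.sup (fun t => (DirectSum.decompose comp t).support.sup Int.toNat) with hNdef
  have hTdeg : ∀ t ∈ T, ∀ e : ℤ, 0 < e → cpt comp e t ≠ 0 → e ≤ (N : ℤ) := by
    intro t ht e he hne
    have hsupp : e ∈ (DirectSum.decompose comp t).support := by
      rw [DFinsupp.mem_support_iff]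
      intro h
      exact hne (by simp [cpt, h])
    have h1 : e.toNat ≤ (DirectSum.decompose comp t).support.sup Int.toNat :=
      Finset.le_sup hsupp
    have h2 : (DirectSum.decompose comp t).support.sup Int.toNat ≤ N :=
      Finset.le_sup (f := fun t => (DirectSum.decompose comp t).support.sup Int.toNat) ht
    omega
  -- the generating set `G` and the candidate subalgebra `Q`
  set G : Set L := {x | ∃ k : ℤ, 0 < k ∧ k ≤ (N : ℤ) ∧ x ∈ comp k} with hGdef
  set Q : LieSubalgebra K L := LieSubalgebra.lieSpan K L G with hQdef
  have hGQ : G ⊆ Q := LieSubalgebra.subset_lieSpan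
  have hcompQ : ∀ k : ℤ, 0 < k → k ≤ (N : ℤ) → ∀ x ∈ comp k, x ∈ Q :=
    fun k h1 h2 x hx => hGQ ⟨k, h1, h2, hx⟩
  -- `Q` is graded, concentrated in positive degrees
  have hQgr : ∀ x ∈ Q, ∀ e : ℤ, cpt comp e x ∈ Q ∧ (e ≤ 0 → cpt comp e x = 0) := by
    have hsub : ∀ (e : ℤ), ∀ a b : L,
        (cpt comp e a ∈ Q ∧ (e ≤ 0 → cpt comp e a = 0)) →
        (cpt comp e b ∈ Q ∧ (e ≤ 0 → cpt comp e b = 0)) → True := fun _ _ _ _ _ => trivial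
    clear hsub
    set Acar : Submodule K L :=
      { carrier := {x | ∀ e : ℤ, cpt comp e x ∈ Q ∧ (e ≤ 0 → cpt comp e x = 0)}
        add_mem' := by
          intro a b ha hb e
          rw [cpt_add]
          exact ⟨Q.add_mem (ha e).1 (hb e).1,
            fun he => by rw [(ha e).2 he, (hb e).2 he, add_zero]⟩
        zero_mem' := by
          intro e
          rw [cpt_zero]
          exact ⟨Q.zero_mem, fun _ => rfl⟩
        smul_mem' := by
          intro c a ha e
          have : cpt comp e (c • a) = c • cpt comp e a := by
            rw [cpt, DirectSum.decompose_smul]; rfl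
          rw [this]
          exact ⟨Q.smul_mem c (ha e).1, fun he => by rw [(ha e).2 he, smul_zero]⟩ } with hAcar
    set A : LieSubalgebra K L :=
      { Acar with
        lie_mem' := by
          intro x y hx hy
          intro e
          constructor
          · refine cpt_lie comp hbr x y e (· ∈ Q) Q.zero_mem (fun a b => Q.add_mem) ?_
            intro i j hij
            rcases le_or_gt i 0 with hi | hi
            · rw [(hx i).2 hi, zero_lie]; exact Q.zero_mem
            · rcases le_or_gt j 0 with hj | hj
              · rw [(hy j).2 hj, lie_zero]; exact Q.zero_mem
              · exact Q.lie_mem (hx i).1 (hy j).1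
          · intro he
            refine cpt_lie comp hbr x y e (· = 0) rfl (fun a b ha hb => by rw [ha, hb, add_zero]) ?_
            intro i j hij
            rcases le_or_gt i 0 with hi | hi
            · rw [(hx i).2 hi, zero_lie]
            · rcases le_or_gt j 0 with hj | hj
              · rw [(hy j).2 hj, lie_zero]
              · omega }
    have hGA : G ⊆ A := by
      rintro g ⟨k, hk0, hkN, hg⟩
      intro e
      by_cases hek : k = e
      · subst hek
        rw [cpt_of_mem_same comp hg]
        exact ⟨hGQ ⟨k, hk0, hkN, hg⟩, fun he => absurd he (by omega)⟩
      · rw [cpt_of_mem_ne comp hg hek]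
        exact ⟨Q.zero_mem, fun _ => rfl⟩
    have : Q ≤ A := by
      rw [hQdef]
      exact (LieSubalgebra.lieSpan_le).mpr hGA
    exact fun x hx e => this hx e
  -- the nonpositive part
  set Neg : Submodule K L :=
    { carrier := {x | ∀ e : ℤ, 0 < e → cpt comp e x = 0}
      add_mem' := by
        intro a b ha hb e he
        rw [cpt_add, ha e he, hb e he, add_zero]
      zero_mem' := by intro e he; rw [cpt_zero]
      smul_mem' := by
        intro c a ha e he
        have : cpt comp e (c • a) = c • cpt comp e a := by
          rw [cpt, DirectSum.decompose_smul]; rfl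
        rw [this, ha e he, smul_zero] } with hNegdef
  have hcompNeg : ∀ k : ℤ, k ≤ 0 → ∀ x ∈ comp k, x ∈ Neg := by
    intro k hk x hx e he
    exact cpt_of_mem_ne comp hx (by omega)
  set M : Submodule K L := Q.toSubmodule ⊔ Neg with hMdef
  have hQM : ∀ x ∈ Q, x ∈ M := fun x hx => Submodule.mem_sup_left hx
  have hNegM : ∀ x ∈ Neg, x ∈ M := fun x hx => Submodule.mem_sup_right hx
  -- components of elements of `M` in positive degrees lie in `Q`
  have hMcpt : ∀ m ∈ M, ∀ e : ℤ, 0 < e → cpt comp e m ∈ Q := by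
    intro m hm e he
    obtain ⟨q, hq, n, hn, rfl⟩ := Submodule.mem_sup.mp hm
    rw [cpt_add, hn e he, add_zero]
    exact (hQgr q hq e).1
  -- main claim, by strong induction on `s`
  have claim : ∀ s : ℕ, ∀ b ∈ comp (-(s : ℤ)), ∀ q ∈ Q, ⁅b, q⁆ ∈ M := by
    intro s
    induction s using Nat.strong_induction_on with
    | _ s IH =>
    -- bracketing an element of `M` supported in degrees `> -s` with an element of `Q`
    have subl : ∀ m : L, (∀ e : ℤ, e ≤ -(s : ℤ) → cpt comp e m = 0) → m ∈ M →
        ∀ y ∈ Q, ⁅m, y⁆ ∈ M := by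
      intro m hsupp hm y hy
      have hcomp : ∀ e : ℤ, ⁅cpt comp e m, y⁆ ∈ M := by
        intro e
        rcases le_or_gt e 0 with he | he
        · rcases le_or_gt e (-(s : ℤ)) with h2 | h2
          · rw [hsupp e h2, zero_lie]; exact M.zero_mem
          · have hcast : -(((-e).toNat : ℕ) : ℤ) = e := by omega
            have hb' : cpt comp e m ∈ comp (-(((-e).toNat : ℕ) : ℤ)) := by
              rw [hcast]; exact cpt_mem comp e m
            exact IH (-e).toNat (by omega) _ hb' y hy
        · exact hQM _ (Q.lie_mem (hMcpt m hm e he) hy)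
      obtain ⟨sFin, hsFin⟩ := lie_eq_sum comp m y
      rw [hsFin]
      exact Submodule.sum_mem _ fun e _ => hcomp e
    intro b hb
    -- components of `⁅b, x⁆` for `x ∈ Q` vanish in degrees `≤ -s`
    have hsuppBr : ∀ x ∈ Q, ∀ e : ℤ, e ≤ -(s : ℤ) → cpt comp e ⁅b, x⁆ = 0 := by
      intro x hx e he
      refine cpt_lie comp hbr b x e (· = 0) rfl (fun a b ha hb => by rw [ha, hb, add_zero]) ?_
      intro i j hij
      by_cases hi : i = -(s : ℤ)
      · rcases le_or_gt j 0 with hj | hj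
        · rw [(hQgr x hx j).2 hj, lie_zero]
        · omega
      · rw [cpt_of_mem_ne comp hb (fun h => hi h.symm), zero_lie]
    set Scar : Submodule K L := Q.toSubmodule ⊓ Submodule.comap (LieAlgebra.ad K L b) M
      with hScar
    have hScar_mem : ∀ x : L, x ∈ Scar ↔ x ∈ Q ∧ ⁅b, x⁆ ∈ M := by
      intro x
      rw [hScar]
      simp [Submodule.mem_inf, LieAlgebra.ad_apply]
    set S : LieSubalgebra K L :=
      { Scar with
        lie_mem' := by
          intro x y hx hy
          have hx' := (hScar_mem x).mp hx
          have hy' := (hScar_mem y).mp hy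
          refine (hScar_mem ⁅x, y⁆).mpr ⟨Q.lie_mem hx'.1 hy'.1, ?_⟩
          have hleib : ⁅b, ⁅x, y⁆⁆ = ⁅⁅b, x⁆, y⁆ + ⁅x, ⁅b, y⁆⁆ := leibniz_lie b x y
          rw [hleib]
          have h1 : ⁅⁅b, x⁆, y⁆ ∈ M := subl _ (hsuppBr x hx'.1) hx'.2 y hy'.1
          have h2 : ⁅⁅b, y⁆, x⁆ ∈ M := subl _ (hsuppBr y hy'.1) hy'.2 x hx'.1
          have h3 : ⁅x, ⁅b, y⁆⁆ = -⁅⁅b, y⁆, x⁆ := (lie_skew _ _).symm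
          rw [h3]
          exact M.add_mem h1 (M.neg_mem h2) }
    have hGS : G ⊆ S := by
      rintro g ⟨k, hk0, hkN, hg⟩
      show g ∈ Scar
      rw [hScar_mem]
      refine ⟨hGQ ⟨k, hk0, hkN, hg⟩, ?_⟩
      have hbg : ⁅b, g⁆ ∈ comp (-(s : ℤ) + k) := hbr _ _ _ hb _ hg
      rcases le_or_gt (-(s : ℤ) + k) 0 with hc | hc
      · exact hNegM _ (hcompNeg _ hc _ hbg)
      · exact hQM _ (hcompQ _ hc (by omega) _ hbg)
    have hQS : Q ≤ S := by
      rw [hQdef]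
      exact (LieSubalgebra.lieSpan_le).mpr hGS
    intro q hq
    have h2 : q ∈ Scar := hQS hq
    exact ((hScar_mem q).mp h2).2
  -- brackets of nonpositive elements with elements of `Q`
  have negBr : ∀ n ∈ Neg, ∀ q ∈ Q, ⁅n, q⁆ ∈ M := by
    intro n hn q hq
    obtain ⟨sFin, hsFin⟩ := lie_eq_sum comp n q
    rw [hsFin]
    refine Submodule.sum_mem _ fun e _ => ?_
    rcases le_or_gt e 0 with he | he
    · have hcast : -(((-e).toNat : ℕ) : ℤ) = e := by omega
      have hb' : cpt comp e n ∈ comp (-(((-e).toNat : ℕ) : ℤ)) := by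
        rw [hcast]; exact cpt_mem comp e n
      exact claim (-e).toNat _ hb' q hq
    · rw [hn e he, zero_lie]; exact M.zero_mem
  -- `Neg` is closed under brackets
  have negNeg : ∀ x ∈ Neg, ∀ y ∈ Neg, ⁅x, y⁆ ∈ Neg := by
    intro x hx y hy e he
    refine cpt_lie comp hbr x y e (· = 0) rfl (fun a b ha hb => by rw [ha, hb, add_zero]) ?_
    intro i j hij
    rcases le_or_gt 0 i with hi | hi
    · rcases lt_or_ge 0 i with hi' | hi'
      · rw [hx i hi', zero_lie]
      · have hj : 0 < j := by omega
        rw [hy j hj, lie_zero]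
    · have hj : 0 < j := by omega
      rw [hy j hj, lie_zero]
  -- `M` is closed under brackets
  have hMlie : ∀ x ∈ M, ∀ y ∈ M, ⁅x, y⁆ ∈ M := by
    intro x hx y hy
    obtain ⟨q1, hq1, n1, hn1, rfl⟩ := Submodule.mem_sup.mp hx
    obtain ⟨q2, hq2, n2, hn2, rfl⟩ := Submodule.mem_sup.mp hy
    rw [add_lie, lie_add, lie_add]
    refine M.add_mem (M.add_mem ?_ ?_) (M.add_mem ?_ ?_)
    · exact hQM _ (Q.lie_mem hq1 hq2)
    · have h := negBr n2 hn2 q1 hq1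
      have : ⁅q1, n2⁆ = -⁅n2, q1⁆ := (lie_skew _ _).symm
      rw [this]; exact M.neg_mem h
    · exact negBr n1 hn1 q2 hq2
    · exact hNegM _ (negNeg n1 hn1 n2 hn2)
  -- `M` is everything
  have hMtop : ∀ x : L, x ∈ M := by
    set Mlie : LieSubalgebra K L := { M with lie_mem' := fun {x y} hx hy => hMlie x hx y hy }
    have hTM : (T : Set L) ⊆ Mlie := by
      intro t ht
      show t ∈ M
      refine mem_of_cpt comp t M fun e => ?_
      rcases le_or_gt e 0 with he | he
      · exact hNegM _ (hcompNeg e he _ (cpt_mem comp e t))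
      · by_cases hz : cpt comp e t = 0
        · rw [hz]; exact M.zero_mem
        · exact hQM _ (hcompQ e he (hTdeg t ht e he hz) _ (cpt_mem comp e t))
    have : LieSubalgebra.lieSpan K L (T : Set L) ≤ Mlie :=
      (LieSubalgebra.lieSpan_le).mpr hTM
    rw [hT] at this
    exact fun x => this trivial
  -- positive components lie in `Q`
  have hposQ : ∀ d : ℤ, 0 < d → ∀ x ∈ comp d, x ∈ Q := by
    intro d hd x hx
    have h1 : cpt comp d x = x := cpt_of_mem_same comp hx
    have h2 : cpt comp d x ∈ Q := hMcpt x (hMtop x) d hd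
    rwa [h1] at h2
  -- construct the finite generating set
  have hfgk : ∀ k : ℤ, ∃ s : Finset L, Submodule.span K (s : Set L) = comp k := by
    intro k
    have : Module.Finite K (comp k) := hfd k
    exact Module.Finite.iff_fg.mp this
  choose sk hsk using hfgk
  refine ⟨(Finset.Icc (1 : ℤ) (N : ℤ)).biUnion sk, ?_⟩
  have hspan : LieSubalgebra.lieSpan K L ((Finset.Icc (1 : ℤ) (N : ℤ)).biUnion sk : Set L) = Q := by
    apply le_antisymm
    · apply (LieSubalgebra.lieSpan_le).mpr
      intro x hx
      rw [Finset.coe_biUnion] at hx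
      simp only [Set.mem_iUnion] at hx
      obtain ⟨k, hk, hxk⟩ := hx
      rw [Finset.mem_coe, Finset.mem_Icc] at hk
      have : x ∈ comp k := by
        rw [← hsk k]
        exact Submodule.subset_span hxk
      exact hGQ ⟨k, by omega, by omega, this⟩
    · rw [hQdef]
      apply (LieSubalgebra.lieSpan_le).mpr
      rintro g ⟨k, hk0, hkN, hg⟩
      have hsub : (sk k : Set L) ⊆
          (LieSubalgebra.lieSpan K L ((Finset.Icc (1 : ℤ) (N : ℤ)).biUnion sk : Set L)) := by
        intro x hx
        apply LieSubalgebra.subset_lieSpan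
        rw [Finset.coe_biUnion]
        simp only [Set.mem_iUnion]
        exact ⟨k, by rw [Finset.mem_coe, Finset.mem_Icc]; omega, hx⟩
      have : comp k ≤ (LieSubalgebra.lieSpan K L
          ((Finset.Icc (1 : ℤ) (N : ℤ)).biUnion sk : Set L)).toSubmodule := by
        rw [← hsk k]
        exact Submodule.span_le.mpr hsub
      exact this hg
  rw [hspan]
  ext x
  simp only [SetLike.mem_coe]
  constructor
  · intro hx
    refine mem_of_cpt comp x (⨆ k > (0 : ℤ), comp k) fun e => ?_
    rcases le_or_gt e 0 with he | he
    · rw [(hQgr x hx e).2 he]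
      exact Submodule.zero_mem _
    · have hle : comp e ≤ ⨆ k > (0 : ℤ), comp k := le_iSup₂ (f := fun k _ => comp k) e he
      exact hle (cpt_mem comp e x)
  · intro hx
    have hle : (⨆ k > (0 : ℤ), comp k) ≤ Q.toSubmodule :=
      iSup₂_le fun k hk => fun x hx => hposQ k hk x hx
    exact hle hx
end

section
/- Let M = ⊕_{n≥1} M_n be a positively graded vector space over a field K with each M_n finite-dimensional, and suppose M has intermediate growth, i.e. limsup_n log⁺(dim M_n)/n = 0. Then the symmetric algebra S(M), with its induced grading, also has intermediate growth. -/
/-- `log⁺ x = log x` if `x ≥ 1` and `0` otherwise. -/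
noncomputable def logPlus (x : ℝ) : ℝ := Real.log (max 1 x)

/-- A sequence of dimensions `f : ℕ → ℕ` has intermediate growth if
`limsup_n log⁺(f n) / n = 0`. -/
noncomputable def HasIntermediateGrowth (f : ℕ → ℕ) : Prop :=
  Filter.limsup (fun n : ℕ => logPlus (f n) / n) Filter.atTop = 0

/-- The dimension of the degree-`n` homogeneous component of the symmetric algebra
on a positively graded vector space whose degree-`k` component has dimension `a k`:
it is the number of commutative monomials of weighted degree `n` in a family of
variables containing `a k` variables of weight `k` for each `k`. -/
noncomputable def symAlgebraGradeDim (a : ℕ → ℕ) (n : ℕ) : ℕ :=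
  Nat.card {d : ((Σ k : ℕ, Fin (a k)) →₀ ℕ) // (d.sum fun i e => i.1 * e) = n}

/-! Weighting the degree-`n` monomials by `r ^ n`, for `0 < r < 1`, gives
`dim S(M)_n * r ^ n ≤ ∏ k, (1 - r ^ k)⁻¹ ^ dim M_k ≤ exp ((1 - r)⁻¹ * ∑ k, dim M_k * r ^ k)`,
and intermediate growth of `M` makes the last series converge. So `dim S(M)_n = O(r ^ (-n))`
for every `r < 1`, which is intermediate growth of `S(M)`.

When `log⁺ (dim M_n) / n` is unbounded, its `limsup` in `ℝ` is the junk value `0`; since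
`dim M_n ≤ dim S(M)_n`, the same then happens for `S(M)`. -/

open Filter Finset Real Topology
open Finsupp (weight weight_apply le_weight le_weight_of_ne_zero')

lemma logPlus_le_iff {x y : ℝ} (hy : 0 ≤ y) : logPlus x ≤ y ↔ x ≤ exp y := by
  rw [logPlus, log_le_iff_le_exp (by positivity), max_le_iff]
  exact and_iff_right (one_le_exp hy)

lemma logPlus_mono : Monotone logPlus := fun _ _ h =>
  log_le_log (by positivity) (max_le_max le_rfl h)

noncomputable def logGrowth (f : ℕ → ℕ) (n : ℕ) : ℝ := logPlus (f n) / n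

lemma logGrowth_nonneg (f : ℕ → ℕ) (n : ℕ) : 0 ≤ logGrowth f n :=
  div_nonneg (log_nonneg (le_max_left _ _)) n.cast_nonneg

lemma logGrowth_mono {f g : ℕ → ℕ} (h : ∀ n, f n ≤ g n) (n : ℕ) :
    logGrowth f n ≤ logGrowth g n :=
  div_le_div_of_nonneg_right (logPlus_mono (by exact_mod_cast h n)) n.cast_nonneg

namespace HasIntermediateGrowth

variable {f : ℕ → ℕ}

lemma of_tendsto (h : Tendsto (logGrowth f) atTop (𝓝 0)) : HasIntermediateGrowth f :=
  h.limsup_eq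

lemma of_not_isBoundedUnder (h : ¬IsBoundedUnder (· ≤ ·) atTop (logGrowth f)) :
    HasIntermediateGrowth f :=
  Real.limsup_of_not_isBoundedUnder h

lemma tendsto (h : HasIntermediateGrowth f) (hb : IsBoundedUnder (· ≤ ·) atTop (logGrowth f)) :
    Tendsto (logGrowth f) atTop (𝓝 0) := by
  refine tendsto_order.2 ⟨fun b hb0 => .of_forall fun n => hb0.trans_le (logGrowth_nonneg f n),
    fun b hb0 => ?_⟩
  exact eventually_lt_of_limsup_lt (h.symm ▸ hb0) hb

end HasIntermediateGrowth

lemma eventually_le_pow_of_tendsto_logGrowth {f : ℕ → ℕ}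
    (h : Tendsto (logGrowth f) atTop (𝓝 0)) {q : ℝ} (hq : 1 < q) :
    ∀ᶠ n in atTop, (f n : ℝ) ≤ q ^ n := by
  have hlog : 0 < log q := log_pos hq
  filter_upwards [h.eventually_le_const hlog, eventually_gt_atTop 0] with n hn hn0
  have hn0' : (0 : ℝ) < n := by exact_mod_cast hn0
  rw [logGrowth, div_le_iff₀ hn0', logPlus_le_iff (by positivity)] at hn
  rwa [mul_comm, exp_nat_mul, exp_log (by linarith)] at hn

lemma summable_mul_pow_of_tendsto_logGrowth {f : ℕ → ℕ}
    (h : Tendsto (logGrowth f) atTop (𝓝 0)) {r : ℝ} (hr0 : 0 ≤ r) (hr1 : r < 1) :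
    Summable fun n => (f n : ℝ) * r ^ n := by
  -- `q = 2 / (1 + r)` lies strictly between `1` and `1 / r`.
  set q := 2 / (1 + r)
  have hq : 1 < q := by rw [lt_div_iff₀ (by linarith)]; linarith
  have hqr : q * r < 1 := by rw [div_mul_eq_mul_div, div_lt_one (by linarith)]; linarith
  refine (summable_geometric_of_lt_one (by positivity) hqr).of_norm_bounded_eventually_nat ?_
  filter_upwards [eventually_le_pow_of_tendsto_logGrowth h hq] with n hn
  rw [Real.norm_of_nonneg (by positivity), mul_pow]
  exact mul_le_mul_of_nonneg_right hn (by positivity)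

lemma tendsto_logGrowth_of_forall_mul_pow_le {f : ℕ → ℕ}
    (h : ∀ r : ℝ, 0 < r → r < 1 → ∃ C, ∀ n, (f n : ℝ) * r ^ n ≤ C) :
    Tendsto (logGrowth f) atTop (𝓝 0) := by
  refine tendsto_order.2 ⟨fun b hb0 => .of_forall fun n => hb0.trans_le (logGrowth_nonneg f n),
    fun ε hε => ?_⟩
  obtain ⟨C, hC⟩ := h (exp (-(ε / 2))) (exp_pos _) (Real.exp_lt_one_iff.2 (by linarith))
  set D := logPlus C
  have hD : 0 ≤ D := log_nonneg (le_max_left _ _)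
  have hbound : ∀ n : ℕ, logPlus (f n) ≤ D + n * (ε / 2) := by
    intro n
    have hfn : (f n : ℝ) = f n * exp (-(ε / 2)) ^ n * exp (ε / 2) ^ n := by
      rw [mul_assoc, ← mul_pow, ← exp_add, neg_add_cancel, exp_zero, one_pow, mul_one]
    rw [logPlus_le_iff (by positivity), exp_add, exp_nat_mul, hfn]
    gcongr
    exact (hC n).trans ((logPlus_le_iff hD).1 le_rfl)
  filter_upwards [(tendsto_const_div_atTop_nhds_zero_nat D).eventually_lt_const (half_pos hε),
    eventually_gt_atTop 0] with n hn hn0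
  have hn0' : (0 : ℝ) < n := by exact_mod_cast hn0
  calc logGrowth f n ≤ (D + n * (ε / 2)) / n := div_le_div_of_nonneg_right (hbound n) hn0'.le
    _ = D / n + ε / 2 := by field_simp
    _ < ε := by linarith

lemma inv_one_sub_le_exp {x r : ℝ} (hx : 0 ≤ x) (hxr : x ≤ r) (hr : r < 1) :
    (1 - x)⁻¹ ≤ exp ((1 - r)⁻¹ * x) := by
  have hx1 : 0 < 1 - x := by linarith
  calc (1 - x)⁻¹ = 1 + x / (1 - x) := by field_simp; ring
    _ ≤ 1 + (1 - r)⁻¹ * x := by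
      rw [inv_mul_eq_div]; gcongr
    _ ≤ exp ((1 - r)⁻¹ * x) := by linarith [add_one_le_exp ((1 - r)⁻¹ * x)]

lemma prod_inv_one_sub_pow_le_exp {ι : Type*} (s : Finset ι) {w : ι → ℕ} (hw : ∀ i, w i ≠ 0)
    {r : ℝ} (hr0 : 0 ≤ r) (hr1 : r < 1) :
    ∏ i ∈ s, (1 - r ^ w i)⁻¹ ≤ exp ((1 - r)⁻¹ * ∑ i ∈ s, r ^ w i) := by
  rw [Finset.mul_sum, exp_sum]
  refine prod_le_prod (fun i _ => inv_nonneg.2 ?_) fun i _ =>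
    inv_one_sub_le_exp (by positivity) (pow_le_of_le_one hr0 hr1.le (hw i)) hr1
  linarith [pow_le_one₀ (n := w i) hr0 hr1.le]

lemma card_filter_sum_mul_eq_mul_pow_le {κ : Type*} [Fintype κ] [DecidableEq κ] {w : κ → ℕ}
    (hw : ∀ i, w i ≠ 0) (m n : ℕ) {r : ℝ} (hr0 : 0 ≤ r) (hr1 : r < 1) :
    (#{g ∈ Fintype.piFinset fun _ : κ => range m | ∑ i, g i * w i = n} : ℝ) * r ^ n ≤
      ∏ i, (1 - r ^ w i)⁻¹ := by
  calc (#{g ∈ Fintype.piFinset fun _ : κ => range m | ∑ i, g i * w i = n} : ℝ) * r ^ n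
      = ∑ g ∈ Fintype.piFinset fun _ : κ => range m with ∑ i, g i * w i = n,
          ∏ i, (r ^ w i) ^ g i := by
        rw [card_eq_sum_ones, Nat.cast_sum, Finset.sum_mul]
        refine sum_congr rfl fun g hg => ?_
        simp_rw [← pow_mul', prod_pow_eq_pow_sum, (mem_filter.1 hg).2, Nat.cast_one, one_mul]
    _ ≤ ∑ g ∈ Fintype.piFinset fun _ : κ => range m, ∏ i, (r ^ w i) ^ g i :=
        sum_le_sum_of_subset_of_nonneg (filter_subset _ _) fun _ _ _ => by positivity
    _ = ∏ i, ∑ e ∈ range m, (r ^ w i) ^ e := (prod_univ_sum _ _).symm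
    _ ≤ ∏ i, (1 - r ^ w i)⁻¹ := by
        refine prod_le_prod (fun _ _ => by positivity) fun i _ => ?_
        have hri : r ^ w i < 1 := pow_lt_one₀ hr0 hr1 (hw i)
        simpa [← range_eq_Ico] using geom_sum_Ico_le_of_lt_one (m := 0) (n := m) (by positivity) hri

section WeightedMonomials

variable {ι : Type*} [DecidableEq ι] {w : ι → ℕ} {n : ℕ} {s : Finset ι}

-- Since all weights are positive, a monomial of weight `n` is supported in `s` with exponents
-- at most `n`, so it is determined by its restriction to `s`, a function `s → range (n + 1)`.
lemma exists_injective_weight_eq (hw : ∀ i, w i ≠ 0) (hs : ∀ i, w i ≤ n → i ∈ s) :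
    ∃ φ : {d : ι →₀ ℕ // weight w d = n} →
      ({g ∈ Fintype.piFinset fun _ : s => range (n + 1) | ∑ i, g i * w i = n} :
        Finset (s → ℕ)),
      Function.Injective φ := by
  have hsupp : ∀ d : ι →₀ ℕ, weight w d = n → d.support ⊆ s :=
    fun d hd i hi => hs i (hd ▸ le_weight_of_ne_zero' w (Finsupp.mem_support_iff.1 hi))
  have hsum : ∀ d : ι →₀ ℕ, d.support ⊆ s → ∑ i : s, d i * w i = weight w d := by
    intro d hd
    rw [weight_apply,
      Finsupp.sum_of_support_subset _ hd (fun i c => c • w i) fun _ _ => zero_smul _ _]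
    simp only [smul_eq_mul]
    exact sum_coe_sort s fun i => d i * w i
  refine ⟨fun d => ⟨fun i => d.1 i, mem_filter.2 ⟨Fintype.mem_piFinset.2 fun i =>
      mem_range.2 (Nat.lt_succ_of_le ((le_weight w (hw i) d.1).trans_eq d.2)),
      (hsum d.1 (hsupp d.1 d.2)).trans d.2⟩⟩, fun d e hde => ?_⟩
  ext i
  by_cases hi : i ∈ s
  · exact congrFun (congrArg Subtype.val hde) ⟨i, hi⟩
  · rw [Finsupp.notMem_support_iff.1 fun h => hi (hsupp d.1 d.2 h),
      Finsupp.notMem_support_iff.1 fun h => hi (hsupp e.1 e.2 h)]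

lemma finite_weight_eq (hw : ∀ i, w i ≠ 0) (hs : ∀ i, w i ≤ n → i ∈ s) :
    Finite {d : ι →₀ ℕ // weight w d = n} :=
  let ⟨_, hφ⟩ := exists_injective_weight_eq hw hs
  Finite.of_injective _ hφ

lemma natCard_weight_eq_mul_pow_le (hw : ∀ i, w i ≠ 0) (hs : ∀ i, w i ≤ n → i ∈ s) {r : ℝ}
    (hr0 : 0 ≤ r) (hr1 : r < 1) :
    (Nat.card {d : ι →₀ ℕ // weight w d = n} : ℝ) * r ^ n ≤ ∏ i ∈ s, (1 - r ^ w i)⁻¹ := by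
  obtain ⟨φ, hφ⟩ := exists_injective_weight_eq hw hs
  rw [← prod_coe_sort]
  refine le_trans ?_ (card_filter_sum_mul_eq_mul_pow_le (fun i : s => hw i) (n + 1) n hr0 hr1)
  gcongr
  exact (Nat.card_le_card_of_injective φ hφ).trans_eq (Nat.card_eq_finsetCard _)

end WeightedMonomials

section SymmetricAlgebra

variable {a : ℕ → ℕ}

lemma symAlgebraGradeDim_eq_natCard_weight (n : ℕ) :
    symAlgebraGradeDim a n = Nat.card {d : (Σ k, Fin (a k)) →₀ ℕ // weight Sigma.fst d = n} := by
  simp_rw [symAlgebraGradeDim, weight_apply, smul_eq_mul, mul_comm]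

lemma sigma_fst_ne_zero (h0 : a 0 = 0) (i : Σ k, Fin (a k)) : i.1 ≠ 0 := by
  obtain ⟨k, j⟩ := i
  rintro rfl
  exact (h0 ▸ j).elim0

lemma mem_range_sigma_univ {n : ℕ} (i : Σ k, Fin (a k)) (hi : i.1 ≤ n) :
    i ∈ (range (n + 1)).sigma fun _ => univ :=
  mem_sigma.2 ⟨mem_range.2 (Nat.lt_succ_of_le hi), mem_univ _⟩

lemma le_symAlgebraGradeDim (h0 : a 0 = 0) (n : ℕ) : a n ≤ symAlgebraGradeDim a n := by
  have := finite_weight_eq (sigma_fst_ne_zero h0) (mem_range_sigma_univ (n := n))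
  rw [symAlgebraGradeDim_eq_natCard_weight, ← Nat.card_fin (a n)]
  refine Nat.card_le_card_of_injective
    (fun j => ⟨Finsupp.single ⟨n, j⟩ 1, by rw [Finsupp.weight_single, one_smul]⟩) fun j j' h => ?_
  simpa using Finsupp.single_left_injective one_ne_zero (congrArg Subtype.val h)

lemma symAlgebraGradeDim_mul_pow_le (h0 : a 0 = 0) (n : ℕ) {r : ℝ} (hr0 : 0 ≤ r) (hr1 : r < 1) :
    (symAlgebraGradeDim a n : ℝ) * r ^ n ≤
      exp ((1 - r)⁻¹ * ∑ k ∈ range (n + 1), (a k : ℝ) * r ^ k) := by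
  rw [symAlgebraGradeDim_eq_natCard_weight]
  refine (natCard_weight_eq_mul_pow_le (sigma_fst_ne_zero h0) mem_range_sigma_univ hr0
    hr1).trans ((prod_inv_one_sub_pow_le_exp _ (sigma_fst_ne_zero h0) hr0 hr1).trans_eq ?_)
  simp [sum_sigma]

lemma tendsto_logGrowth_symAlgebraGradeDim (h0 : a 0 = 0)
    (h : Tendsto (logGrowth a) atTop (𝓝 0)) :
    Tendsto (logGrowth (symAlgebraGradeDim a)) atTop (𝓝 0) := by
  refine tendsto_logGrowth_of_forall_mul_pow_le fun r hr0 hr1 =>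
    ⟨exp ((1 - r)⁻¹ * ∑' k, (a k : ℝ) * r ^ k), fun n => ?_⟩
  refine (symAlgebraGradeDim_mul_pow_le h0 n hr0.le hr1).trans ?_
  gcongr
  exact (summable_mul_pow_of_tendsto_logGrowth h hr0.le hr1).sum_le_tsum _
    fun k _ => by positivity

end SymmetricAlgebra

theorem symmetricAlgebra_intermediateGrowth_general
    (K V : Type*) [Field K] [AddCommGroup V] [Module K V]
    (comp : ℕ → Submodule K V)
    (h0 : comp 0 = ⊥)
    (hgrowth : HasIntermediateGrowth fun n => Module.finrank K (comp n)) :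
    HasIntermediateGrowth (symAlgebraGradeDim fun n => Module.finrank K (comp n)) := by
  set a : ℕ → ℕ := fun n => Module.finrank K (comp n)
  have ha0 : a 0 = 0 := by simp only [a]; rw [h0, finrank_bot]
  by_cases hbdd : IsBoundedUnder (· ≤ ·) atTop (logGrowth a)
  · exact .of_tendsto (tendsto_logGrowth_symAlgebraGradeDim ha0 (hgrowth.tendsto hbdd))
  · exact .of_not_isBoundedUnder fun hb =>
      hbdd (hb.mono_le (.of_forall (logGrowth_mono (le_symAlgebraGradeDim ha0))))

/-- Let `M = ⊕_{n ≥ 1} M_n` be a positively graded vector space with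
finite-dimensional homogeneous components having intermediate growth.  Then the
symmetric algebra `S(M)`, with its induced grading, also has intermediate growth. -/
theorem symmetricAlgebra_intermediateGrowth
    (K V : Type*) [Field K] [AddCommGroup V] [Module K V]
    (comp : ℕ → Submodule K V) (hint : DirectSum.IsInternal comp)
    (h0 : comp 0 = ⊥) (hfd : ∀ n, FiniteDimensional K (comp n))
    (hgrowth : HasIntermediateGrowth fun n => Module.finrank K (comp n)) :
    HasIntermediateGrowth (symAlgebraGradeDim fun n => Module.finrank K (comp n)) :=
  symmetricAlgebra_intermediateGrowth_general K V comp h0 hgrowth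
end

section
/- Let g be a Lie algebra over a field K of characteristic 0 and M a finite-dimensional g-module with d = dim M. Then for every n ≥ 1, every cyclic U(g)-submodule C of the tensor power M^{⊗n} satisfies dim C ≤ binom(n + d² - 1, n). In particular the dimensions of cyclic submodules of M^{⊗n} are bounded by a polynomial in n of degree d² - 1. -/
open scoped TensorProduct

/-- A bundled Lie module over the Lie algebra `g` (over the field `K`). -/
structure LieModBundle (K g : Type*) [CommRing K] [LieRing g] [LieAlgebra K g] where
  carrier : Type u_3
  [acg : AddCommGroup carrier]
  [mod : Module K carrier]
  [lrm : LieRingModule g carrier]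
  [lm : LieModule K g carrier]

variable (K g M : Type) [Field K] [LieRing g] [LieAlgebra K g]
  [AddCommGroup M] [Module K M] [LieRingModule g M] [LieModule K g M]

/-- `tensorPower K g M n` is the `(n+1)`-fold tensor power `M ⊗ ⋯ ⊗ M`, with the
diagonal `g`-action coming from the (cocommutative) coproduct of `U(g)`. -/
noncomputable def tensorPower : ℕ → LieModBundle K g
  | 0 => LieModBundle.mk M
  | (n+1) =>
      letI B := tensorPower n
      letI := B.acg; letI := B.mod; letI := B.lrm; letI := B.lm
      LieModBundle.mk (M ⊗[K] B.carrier)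

/-!
Fix a basis `(b t)` of `End M`. Call an operator on `M^{⊗n}` symmetric if it is a combination
`∑ f, c f • b (f 0) ⊗ ⋯ ⊗ b (f (n-1))` whose coefficient `c f` depends only on the multiset
`{f 0, …, f (n-1)}`; symmetric operators form a space of dimension at most the number
`(d² + n - 1).choose n` of such multisets. The identity is symmetric, and `x ∈ g` acts on
`M^{⊗n}` by `∑ i, 1 ⊗ ⋯ ⊗ x ⊗ ⋯ ⊗ 1`, which maps symmetric operators to symmetric ones under
left multiplication. So the cyclic submodule generated by `v` lies in the space of values `φ v`
of symmetric operators `φ`.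
-/

open Function

section General

theorem Multiset.map_univ_update {ι κ : Type*} [DecidableEq ι] [Fintype κ] [DecidableEq κ]
    (f : κ → ι) (i : κ) (t : ι) :
    Finset.univ.val.map (update f i t) = t ::ₘ (Finset.univ.val.map f).erase (f i) := by
  have huniv : (Finset.univ : Finset κ).val = i ::ₘ (Finset.univ.erase i).val :=
    (Multiset.cons_erase (Finset.mem_univ i)).symm
  have hoff : (Finset.univ.erase i).val.map (update f i t) = (Finset.univ.erase i).val.map f :=
    Multiset.map_congr rfl fun j hj => update_of_ne (Finset.ne_of_mem_erase hj) t f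
  rw [huniv, Multiset.map_cons, Multiset.map_cons, update_self, hoff, Multiset.erase_cons_head]

theorem Fintype.sum_sum_update_swap {ι κ β : Type*} [Fintype ι] [Fintype κ] [DecidableEq κ]
    [AddCommMonoid β] (i : κ) (G : (κ → ι) → ι → β) :
    ∑ f : κ → ι, ∑ t, G (update f i t) (f i) = ∑ f : κ → ι, ∑ t, G f t := by
  have hinv : Involutive fun p : (κ → ι) × ι => (update p.1 i p.2, p.1 i) := by
    rintro ⟨f, t⟩
    simp
  simp only [← Fintype.sum_prod_type']
  exact Equiv.sum_comp hinv.toPerm fun p => G p.1 p.2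

variable {K} in
theorem MultilinearMap.map_eq_sum_basis {κ ι V W : Type*} [Fintype κ] [DecidableEq κ]
    [Fintype ι] [AddCommGroup V] [Module K V] [AddCommGroup W] [Module K W]
    (F : MultilinearMap K (fun _ : κ => V) W) (b : Module.Basis ι K V) (w : κ → V) :
    F w = ∑ r : κ → ι, (∏ j, b.repr (w j) (r j)) • F (b ∘ r) := by
  conv_lhs => rw [← funext fun j => b.sum_repr (w j), F.map_sum]
  exact Finset.sum_congr rfl fun r _ => F.map_smul_univ _ _

variable {V ι : Type*} [AddCommGroup V] [Module K V] [Fintype ι]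

noncomputable def symmetricSum (n : ℕ) (Φ : (Fin n → ι) → V) : (Multiset ι → K) →ₗ[K] V :=
  Fintype.linearCombination K Φ ∘ₗ LinearMap.funLeft K K (fun f => Finset.univ.val.map f)

theorem symmetricSum_apply (n : ℕ) (Φ : (Fin n → ι) → V) (c : Multiset ι → K) :
    symmetricSum K n Φ c = ∑ f, c (Finset.univ.val.map f) • Φ f := by
  simp [symmetricSum, Fintype.linearCombination_apply]

theorem rank_range_symmetricSum_le (n : ℕ) (Φ : (Fin n → ι) → V) :
    Module.rank K (LinearMap.range (symmetricSum K n Φ))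
      ≤ ((Fintype.card ι + n - 1).choose n : Cardinal) := by
  classical
  let toSym : (Fin n → ι) → Sym ι n := fun f => ⟨Finset.univ.val.map f, by simp⟩
  let Ψ := Fintype.linearCombination K Φ ∘ₗ LinearMap.funLeft K K toSym
  have hfactor : symmetricSum K n Φ = Ψ ∘ₗ LinearMap.funLeft K K (↑) := rfl
  have hΨ :
      Module.rank K (LinearMap.range Ψ) ≤ ((Fintype.card ι + n - 1).choose n : Cardinal) := by
    simpa [rank_fun', Sym.card_sym_eq_choose] using lift_rank_range_le Ψ
  exact (Submodule.rank_mono (hfactor ▸ LinearMap.range_comp_le_range _ _)).trans hΨ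

end General

noncomputable instance (m : ℕ) : AddCommGroup (tensorPower K g M m).carrier :=
  (tensorPower K g M m).acg
noncomputable instance (m : ℕ) : Module K (tensorPower K g M m).carrier :=
  (tensorPower K g M m).mod
noncomputable instance (m : ℕ) : LieRingModule g (tensorPower K g M m).carrier :=
  (tensorPower K g M m).lrm
noncomputable instance (m : ℕ) : LieModule K g (tensorPower K g M m).carrier :=
  (tensorPower K g M m).lm

noncomputable def tensorPowerMap : (m : ℕ) →
    MultilinearMap K (fun _ : Fin (m + 1) => Module.End K M)
      (Module.End K (tensorPower K g M m).carrier)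
  | 0 => MultilinearMap.ofSubsingleton K _ _ (0 : Fin 1) LinearMap.id
  | m + 1 => LinearMap.uncurryLeft
      { toFun := fun a =>
          (TensorProduct.mapBilinear (RingHom.id K) M _ M _ a).compMultilinearMap (tensorPowerMap m)
        map_add' := fun a b => by rw [map_add, LinearMap.add_compMultilinearMap]; rfl
        map_smul' := fun c a => by rw [map_smul, LinearMap.smul_compMultilinearMap]; rfl }

theorem tensorPowerMap_zero (w : Fin 1 → Module.End K M) : tensorPowerMap K g M 0 w = w 0 :=
  rfl

theorem tensorPowerMap_succ (m : ℕ) (w : Fin (m + 2) → Module.End K M) :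
    tensorPowerMap K g M (m + 1) w
      = TensorProduct.map (w 0) (tensorPowerMap K g M m (Fin.tail w)) :=
  rfl

theorem tensorPowerMap_one : ∀ m, tensorPowerMap K g M m 1 = 1
  | 0 => rfl
  | m + 1 => (congrArg (TensorProduct.map 1) (tensorPowerMap_one m)).trans TensorProduct.map_one

theorem tensorPowerMap_mul : ∀ m (w w' : Fin (m + 1) → Module.End K M),
    tensorPowerMap K g M m (w * w') = tensorPowerMap K g M m w * tensorPowerMap K g M m w'
  | 0, _, _ => rfl
  | m + 1, w, w' => by
    show TensorProduct.map (w 0 * w' 0) (tensorPowerMap K g M m (Fin.tail w * Fin.tail w'))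
      = TensorProduct.map (w 0) (tensorPowerMap K g M m (Fin.tail w))
        * TensorProduct.map (w' 0) (tensorPowerMap K g M m (Fin.tail w'))
    rw [tensorPowerMap_mul, TensorProduct.map_mul]

theorem toEnd_tensorPower : ∀ (m : ℕ) (x : g),
    LieModule.toEnd K g (tensorPower K g M m).carrier x
      = ∑ i, tensorPowerMap K g M m (Pi.mulSingle i (LieModule.toEnd K g M x))
  | 0, x => by
    rw [Fin.sum_univ_one, tensorPowerMap_zero, Pi.mulSingle_eq_same]
    rfl
  | m + 1, x => by
    have htail_one : Fin.tail (1 : Fin (m + 2) → Module.End K M) = 1 := rfl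
    show (LieModule.toEnd K g M x).rTensor _ + (LieModule.toEnd K g _ x).lTensor M = _
    rw [Fin.sum_univ_succ, toEnd_tensorPower m x]
    simp only [tensorPowerMap_succ, Pi.mulSingle, Fin.tail_update_zero, Fin.tail_update_succ,
      update_self, htail_one, tensorPowerMap_one]
    exact congrArg₂ (· + ·) rfl (map_sum (LinearMap.lTensorHom M) _ _)

section SymmetricOperators

variable {K g M} {ι : Type*} [Fintype ι] (b : Module.Basis ι K (Module.End K M))

theorem tensorPowerMap_mulSingle_mul_basis (m : ℕ) (i : Fin (m + 1)) (a : Module.End K M)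
    (f : Fin (m + 1) → ι) :
    tensorPowerMap K g M m (Pi.mulSingle i a) * tensorPowerMap K g M m (b ∘ f)
      = ∑ t, b.repr (a * b (f i)) t • tensorPowerMap K g M m (b ∘ update f i t) := by
  have hprod : Pi.mulSingle i a * (b ∘ f) = update (b ∘ f) i (a * b (f i)) := by
    ext1 j
    by_cases hj : j = i
    · subst hj; simp
    · simp [hj]
  rw [← tensorPowerMap_mul, hprod]
  conv_lhs => rw [← b.sum_repr (a * b (f i)), MultilinearMap.map_update_sum]
  exact Finset.sum_congr rfl fun t _ => by rw [MultilinearMap.map_update_smul, comp_update]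

/-- The multiset `s` arises from `t ::ₘ s.erase x` when `a` acts on the factor `b t` in one slot
and the result is read off at `b x`. -/
noncomputable def derivationCoeff [DecidableEq ι] (a : Module.End K M) (c : Multiset ι → K) :
    Multiset ι → K :=
  fun s => (s.map fun x => ∑ t, c (t ::ₘ s.erase x) * b.repr (a * b t) x).sum

theorem derivationCoeff_map_univ [DecidableEq ι] {κ : Type*} [Fintype κ] [DecidableEq κ]
    (a : Module.End K M) (c : Multiset ι → K) (f : κ → ι) :
    derivationCoeff b a c (Finset.univ.val.map f)
      = ∑ i, ∑ t, c (Finset.univ.val.map (update f i t)) * b.repr (a * b t) (f i) := by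
  simp only [derivationCoeff, Multiset.map_univ_update, Multiset.map_map, comp_apply,
    Finset.sum_eq_multiset_sum]

theorem sum_tensorPowerMap_mulSingle_mul_symmetricSum [DecidableEq ι] (m : ℕ)
    (a : Module.End K M) (c : Multiset ι → K) :
    (∑ i, tensorPowerMap K g M m (Pi.mulSingle i a))
        * symmetricSum K (m + 1) (fun f => tensorPowerMap K g M m (b ∘ f)) c
      = symmetricSum K (m + 1) (fun f => tensorPowerMap K g M m (b ∘ f))
          (derivationCoeff b a c) := by
  simp only [symmetricSum_apply, Finset.sum_mul, Finset.mul_sum, mul_smul_comm,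
    tensorPowerMap_mulSingle_mul_basis, Finset.smul_sum, smul_smul]
  have hswap : ∀ i : Fin (m + 1),
      ∑ f : Fin (m + 1) → ι, ∑ t, (c (Finset.univ.val.map f) * b.repr (a * b (f i)) t) •
          tensorPowerMap K g M m (b ∘ update f i t)
        = ∑ f : Fin (m + 1) → ι, ∑ t, (c (Finset.univ.val.map (update f i t))
          * b.repr (a * b t) (f i)) • tensorPowerMap K g M m (b ∘ f) := fun i => by
    rw [← Fintype.sum_sum_update_swap i]
    simp only [update_idem, update_eq_self, update_self]
  rw [Finset.sum_comm]
  simp only [hswap, derivationCoeff_map_univ, Finset.sum_smul]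
  rw [Finset.sum_comm]

variable (g) in
noncomputable def symmetricOperators (m : ℕ) :
    Submodule K (Module.End K (tensorPower K g M m).carrier) :=
  LinearMap.range (symmetricSum K (m + 1) fun f => tensorPowerMap K g M m (b ∘ f))

theorem one_mem_symmetricOperators (m : ℕ) : 1 ∈ symmetricOperators g b m := by
  refine ⟨fun s => (s.map (b.repr 1)).prod, ?_⟩
  rw [symmetricSum_apply, ← tensorPowerMap_one, MultilinearMap.map_eq_sum_basis _ b]
  simp only [Multiset.map_map, comp_apply, Pi.one_apply, Finset.prod_eq_multiset_prod]

theorem toEnd_mul_mem_symmetricOperators (m : ℕ) (x : g)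
    {φ : Module.End K (tensorPower K g M m).carrier} (hφ : φ ∈ symmetricOperators g b m) :
    LieModule.toEnd K g _ x * φ ∈ symmetricOperators g b m := by
  classical
  obtain ⟨c, rfl⟩ := hφ
  rw [toEnd_tensorPower, sum_tensorPowerMap_mulSingle_mul_symmetricSum]
  exact LinearMap.mem_range_self _ _

noncomputable def symmetricOperatorsApply (m : ℕ)
    (v : (tensorPower K g M m).carrier) : LieSubmodule K g (tensorPower K g M m).carrier where
  toSubmodule := (symmetricOperators g b m).map (LinearMap.applyₗ v)
  lie_mem := by
    rintro x _ ⟨φ, hφ, rfl⟩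
    exact ⟨_, toEnd_mul_mem_symmetricOperators b m x hφ, rfl⟩

theorem lieSpan_singleton_le_symmetricOperatorsApply (m : ℕ)
    (v : (tensorPower K g M m).carrier) :
    LieSubmodule.lieSpan K g {v} ≤ symmetricOperatorsApply b m v :=
  LieSubmodule.lieSpan_le.2 <|
    Set.singleton_subset_iff.2 ⟨1, one_mem_symmetricOperators b m, rfl⟩

theorem rank_symmetricOperatorsApply_le (m : ℕ)
    (v : (tensorPower K g M m).carrier) :
    Module.rank K (symmetricOperatorsApply b m v)
      ≤ ((Fintype.card ι + (m + 1) - 1).choose (m + 1) : Cardinal) :=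
  (rank_map_le _ _).trans (rank_range_symmetricSum_le K _ _)

end SymmetricOperators

/-- Let `M` be a finite-dimensional module over a Lie algebra `g`, `d = dim M`.
For every `n ≥ 1`, every cyclic submodule `C = U(g)·v` of `M^{⊗n}` has dimension
at most `(n + d² - 1).choose n`, a polynomial bound of degree `d² - 1` in `n`. -/
theorem cyclic_submodule_tensorPower_dim_le
    [FiniteDimensional K M]
    (d : ℕ) (hd : d = Module.finrank K M)
    (n : ℕ) (hn : 1 ≤ n)
    (v : (tensorPower K g M (n - 1)).carrier) :
    letI B := tensorPower K g M (n - 1)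
    letI := B.acg; letI := B.mod; letI := B.lrm; letI := B.lm
    Module.rank K (LieSubmodule.lieSpan K g ({v} : Set B.carrier))
      ≤ ((n + d ^ 2 - 1).choose n : Cardinal) := by
  obtain ⟨m, rfl⟩ : ∃ m, n = m + 1 := ⟨n - 1, by omega⟩
  let b := Module.finBasis K (Module.End K M)
  have hcard : Fintype.card (Fin (Module.finrank K (Module.End K M))) = d ^ 2 := by
    rw [Fintype.card_fin, Module.finrank_linearMap, hd, sq]
  calc Module.rank K (LieSubmodule.lieSpan K g {v})
      ≤ Module.rank K (symmetricOperatorsApply b m v) :=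
        Submodule.rank_mono (lieSpan_singleton_le_symmetricOperatorsApply b m v)
    _ ≤ _ := (rank_symmetricOperatorsApply_le b m v).trans_eq (by rw [hcard, add_comm])
end

section
/- Let L be a Lie algebra over a field K and let A, B be linear subspaces of L with L = A + B and [A, B] ⊆ B. Then B + [B, B] is a Lie ideal of L. -/
/-!
Writing `x = a + b'` with `a ∈ A`, `b' ∈ B` gives `⁅x, b⁆ = ⁅a, b⁆ + ⁅b', b⁆ ∈ B + [B, B]` for
`b ∈ B`. The Leibniz rule `⁅x, ⁅b, b'⁆⁆ = ⁅⁅x, b⁆, b'⁆ + ⁅b, ⁅x, b'⁆⁆` writes `⁅x, [B, B]⁆` through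
brackets of arbitrary elements with elements of `B`, so it lands in `B + [B, B]` as well.
-/

namespace Submodule

variable {R L : Type*} [CommRing R] [LieRing L] [LieAlgebra R L]

def bracketSpan (B : Submodule R L) : Submodule R L :=
  span R {z : L | ∃ x ∈ B, ∃ y ∈ B, z = ⁅x, y⁆}

lemma lie_mem_bracketSpan {B : Submodule R L} {x y : L} (hx : x ∈ B) (hy : y ∈ B) :
    ⁅x, y⁆ ∈ B.bracketSpan :=
  subset_span ⟨x, hx, y, hy, rfl⟩

lemma lie_mem_sup_bracketSpan_of_sup_eq_top {A B : Submodule R L} (hsum : A ⊔ B = ⊤)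
    (hbr : ∀ a ∈ A, ∀ b ∈ B, ⁅a, b⁆ ∈ B) (x : L) {b : L} (hb : b ∈ B) :
    ⁅x, b⁆ ∈ B ⊔ B.bracketSpan := by
  obtain ⟨a, ha, b', hb', rfl⟩ := mem_sup.mp (hsum ▸ mem_top : x ∈ A ⊔ B)
  rw [add_lie]
  exact add_mem (mem_sup_left (hbr a ha b hb)) (mem_sup_right (lie_mem_bracketSpan hb' hb))

lemma lie_mem_of_mem_bracketSpan {B S : Submodule R L} (hS : ∀ x : L, ∀ b ∈ B, ⁅x, b⁆ ∈ S)
    (x : L) {z : L} (hz : z ∈ B.bracketSpan) : ⁅x, z⁆ ∈ S := by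
  suffices B.bracketSpan ≤ S.comap (LieAlgebra.ad R L x) from this hz
  refine span_le.mpr ?_
  rintro _ ⟨b, hb, b', hb', rfl⟩
  rw [SetLike.mem_coe, mem_comap, LieAlgebra.ad_apply, leibniz_lie, ← lie_skew b]
  exact add_mem (hS _ b' hb') (neg_mem (hS _ b hb))

lemma lie_mem_sup_bracketSpan {B : Submodule R L}
    (hB : ∀ x : L, ∀ b ∈ B, ⁅x, b⁆ ∈ B ⊔ B.bracketSpan) (x : L) {m : L}
    (hm : m ∈ B ⊔ B.bracketSpan) : ⁅x, m⁆ ∈ B ⊔ B.bracketSpan := by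
  obtain ⟨b, hb, z, hz, rfl⟩ := mem_sup.mp hm
  rw [lie_add]
  exact add_mem (hB x b hb) (lie_mem_of_mem_bracketSpan hB x hz)

end Submodule

/-- Let `A`, `B` be linear subspaces of a Lie algebra `L` with `L = A + B` and
`[A, B] ⊆ B`.  Then `B + [B, B]` is a Lie ideal of `L`. -/
theorem lieIdeal_of_add_bracket
    (K : Type*) [Field K] (L : Type*) [LieRing L] [LieAlgebra K L]
    (A B : Submodule K L)
    (hsum : A ⊔ B = ⊤)
    (hbr : ∀ a ∈ A, ∀ b ∈ B, ⁅a, b⁆ ∈ B) :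
    ∃ I : LieIdeal K L,
      (I : Submodule K L)
        = B ⊔ Submodule.span K {z : L | ∃ x ∈ B, ∃ y ∈ B, z = ⁅x, y⁆} :=
  ⟨{ B ⊔ B.bracketSpan with
      lie_mem := Submodule.lie_mem_sup_bracketSpan
        (Submodule.lie_mem_sup_bracketSpan_of_sup_eq_top hsum hbr) _ }, rfl⟩
end

section
/- Let L be a Lie algebra over a field K and S a linear subspace of L. Let N be the set of elements x ∈ L that are locally S-nilpotent, i.e. ad(S)^{n+1}(x) = 0 for some n (where ad(S)^k(x) denotes the span of all iterated brackets [s_k, [..., [s_1, x]...]] with s_i ∈ S). Then N is a Lie subalgebra of L. -/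
variable (K L : Type*) [Field K] [LieRing L] [LieAlgebra K L]

/-- `adSpan K L S V` is the span of all brackets `⁅s, v⁆` with `s ∈ S`, `v ∈ V`. -/
def adSpan (S V : Submodule K L) : Submodule K L :=
  Submodule.span K {z : L | ∃ s ∈ S, ∃ v ∈ V, z = ⁅s, v⁆}

/-- `adPow K L S n V = ad(S)ⁿ(V)`, the span of `n`-fold iterated brackets
`⁅sₙ, ⁅…, ⁅s₁, v⁆…⁆⁆` with `sᵢ ∈ S`, `v ∈ V`. -/
def adPow (S : Submodule K L) : ℕ → Submodule K L → Submodule K L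
  | 0, V => V
  | (n + 1), V => adSpan K L S (adPow S n V)

/-! Each `ad s` is a derivation, so on subspaces `ad(S) [V, W] ⊆ [ad(S) V, W] + [V, ad(S) W]`,
where the bracket `[V, W]` of two subspaces is `adSpan K L V W`. Iterating,
`ad(S)ⁿ [V, W] ⊆ ∑_{i + j = n} [ad(S)ⁱ V, ad(S)ʲ W]`, and every summand vanishes for `n = m + m'`
once `ad(S)ᵐ V = 0` and `ad(S)^m' W = 0`. Sums and scalar multiples are handled by
`ad(S)ⁿ (V + W) = ad(S)ⁿ V + ad(S)ⁿ W` and monotonicity of `ad(S)ⁿ`. -/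

open Finset

section

variable {K L}

theorem adSpan_eq_map₂ (V W : Submodule K L) :
    adSpan K L V W = Submodule.map₂ (LieModule.toEnd K L L : L →ₗ[K] Module.End K L) V W := by
  rw [Submodule.map₂_eq_span_image2, adSpan]
  congr 1
  ext z
  simp [Set.mem_image2, eq_comm]

theorem adSpan_le_iff {V W P : Submodule K L} :
    adSpan K L V W ≤ P ↔ ∀ v ∈ V, ∀ w ∈ W, ⁅v, w⁆ ∈ P := by
  rw [adSpan_eq_map₂, Submodule.map₂_le]
  rfl

theorem lie_mem_adSpan {V W : Submodule K L} {v w : L} (hv : v ∈ V) (hw : w ∈ W) :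
    ⁅v, w⁆ ∈ adSpan K L V W :=
  adSpan_le_iff.mp le_rfl v hv w hw

theorem adSpan_mono {V V' W W' : Submodule K L} (hV : V ≤ V') (hW : W ≤ W') :
    adSpan K L V W ≤ adSpan K L V' W' := by
  simpa only [adSpan_eq_map₂] using Submodule.map₂_le_map₂ hV hW

@[simp]
theorem adSpan_bot_left (W : Submodule K L) : adSpan K L ⊥ W = ⊥ := by
  simp [adSpan_eq_map₂]

@[simp]
theorem adSpan_bot_right (V : Submodule K L) : adSpan K L V ⊥ = ⊥ := by
  simp [adSpan_eq_map₂]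

theorem adSpan_sup_right (V W₁ W₂ : Submodule K L) :
    adSpan K L V (W₁ ⊔ W₂) = adSpan K L V W₁ ⊔ adSpan K L V W₂ := by
  simp only [adSpan_eq_map₂, Submodule.map₂_sup_right]

theorem adSpan_finset_sup_right {ι : Type*} (V : Submodule K L) (t : Finset ι)
    (W : ι → Submodule K L) :
    adSpan K L V (t.sup W) = t.sup fun i => adSpan K L V (W i) := by
  simp_rw [Finset.sup_eq_iSup, adSpan_eq_map₂, Submodule.map₂_iSup_right]

/-- The Leibniz rule `[s, [v, w]] = [[s, v], w] + [v, [s, w]]`, read on subspaces. -/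
theorem adSpan_adSpan_le (S V W : Submodule K L) :
    adSpan K L S (adSpan K L V W)
      ≤ adSpan K L (adSpan K L S V) W ⊔ adSpan K L V (adSpan K L S W) := by
  refine adSpan_le_iff.mpr fun s hs u hu => ?_
  suffices adSpan K L V W ≤ (adSpan K L (adSpan K L S V) W ⊔ adSpan K L V (adSpan K L S W)).comap
      (LieAlgebra.ad K L s) from this hu
  refine adSpan_le_iff.mpr fun v hv w hw => ?_
  rw [Submodule.mem_comap, LieAlgebra.ad_apply, leibniz_lie]
  exact add_mem (Submodule.mem_sup_left (lie_mem_adSpan (lie_mem_adSpan hs hv) hw))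
    (Submodule.mem_sup_right (lie_mem_adSpan hv (lie_mem_adSpan hs hw)))

section adPow

variable {S : Submodule K L}

theorem adPow_succ (n : ℕ) (V : Submodule K L) :
    adPow K L S (n + 1) V = adSpan K L S (adPow K L S n V) :=
  rfl

theorem adPow_mono (n : ℕ) {V W : Submodule K L} (h : V ≤ W) :
    adPow K L S n V ≤ adPow K L S n W := by
  induction n with
  | zero => exact h
  | succ n ih => exact adSpan_mono le_rfl ih

@[simp]
theorem adPow_bot (n : ℕ) : adPow K L S n ⊥ = ⊥ := by
  induction n with
  | zero => rfl
  | succ n ih => rw [adPow_succ, ih, adSpan_bot_right]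

theorem adPow_add (m n : ℕ) (V : Submodule K L) :
    adPow K L S (m + n) V = adPow K L S n (adPow K L S m V) := by
  induction n with
  | zero => rfl
  | succ n ih => rw [← add_assoc, adPow_succ, ih, adPow_succ]

theorem adPow_eq_bot_of_le {m n : ℕ} {V : Submodule K L} (hmn : m ≤ n)
    (h : adPow K L S m V = ⊥) : adPow K L S n V = ⊥ := by
  obtain ⟨k, rfl⟩ := Nat.exists_eq_add_of_le hmn
  rw [adPow_add, h, adPow_bot]

theorem adPow_sup (n : ℕ) (V W : Submodule K L) :
    adPow K L S n (V ⊔ W) = adPow K L S n V ⊔ adPow K L S n W := by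
  induction n with
  | zero => rfl
  | succ n ih => rw [adPow_succ, ih, adSpan_sup_right, adPow_succ, adPow_succ]

theorem adPow_adSpan_le (n : ℕ) (V W : Submodule K L) :
    adPow K L S n (adSpan K L V W)
      ≤ (antidiagonal n).sup fun p => adSpan K L (adPow K L S p.1 V) (adPow K L S p.2 W) := by
  induction n with
  | zero =>
    exact le_sup_of_le (b := (0, 0)) (HasAntidiagonal.mem_antidiagonal.mpr rfl) le_rfl
  | succ n ih =>
    rw [adPow_succ]
    refine (adSpan_mono le_rfl ih).trans ?_
    rw [adSpan_finset_sup_right]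
    refine Finset.sup_le fun ⟨i, j⟩ hij => ?_
    obtain rfl : i + j = n := HasAntidiagonal.mem_antidiagonal.mp hij
    refine (adSpan_adSpan_le _ _ _).trans (sup_le ?_ ?_)
    · refine le_sup_of_le (b := (i + 1, j)) (HasAntidiagonal.mem_antidiagonal.mpr ?_) le_rfl
      omega
    · refine le_sup_of_le (b := (i, j + 1)) (HasAntidiagonal.mem_antidiagonal.mpr ?_) le_rfl
      omega

theorem adPow_sup_eq_bot {m n : ℕ} {V W : Submodule K L} (hV : adPow K L S m V = ⊥)
    (hW : adPow K L S n W = ⊥) : adPow K L S (max m n) (V ⊔ W) = ⊥ := by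
  rw [adPow_sup, adPow_eq_bot_of_le (le_max_left m n) hV,
    adPow_eq_bot_of_le (le_max_right m n) hW, sup_bot_eq]

theorem adPow_adSpan_eq_bot {m n : ℕ} {V W : Submodule K L} (hV : adPow K L S m V = ⊥)
    (hW : adPow K L S n W = ⊥) : adPow K L S (m + n) (adSpan K L V W) = ⊥ := by
  refine eq_bot_iff.mpr ((adPow_adSpan_le _ _ _).trans (Finset.sup_le fun ⟨i, j⟩ hij => ?_))
  replace hij : i + j = m + n := HasAntidiagonal.mem_antidiagonal.mp hij
  rcases le_or_gt m i with hi | hi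
  · rw [adPow_eq_bot_of_le hi hV, adSpan_bot_left]
  · rw [adPow_eq_bot_of_le (by omega : n ≤ j) hW, adSpan_bot_right]

end adPow

variable (S : Submodule K L)

def locallyNilpotentSubalgebra : LieSubalgebra K L where
  carrier := {x | ∃ n, adPow K L S n (K ∙ x) = ⊥}
  zero_mem' := ⟨0, Submodule.span_zero_singleton K⟩
  add_mem' := by
    rintro x y ⟨m, hx⟩ ⟨n, hy⟩
    have hxy : K ∙ (x + y) ≤ (K ∙ x) ⊔ (K ∙ y) :=
      (Submodule.span_singleton_le_iff_mem _ _).mpr <| add_mem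
        (Submodule.mem_sup_left (Submodule.mem_span_singleton_self x))
        (Submodule.mem_sup_right (Submodule.mem_span_singleton_self y))
    exact ⟨max m n, eq_bot_mono (adPow_mono _ hxy) (adPow_sup_eq_bot hx hy)⟩
  smul_mem' := by
    rintro c x ⟨n, hx⟩
    exact ⟨n, eq_bot_mono (adPow_mono _ (Submodule.span_singleton_smul_le _ c x)) hx⟩
  lie_mem' := by
    rintro x y ⟨m, hx⟩ ⟨n, hy⟩
    have hxy : K ∙ ⁅x, y⁆ ≤ adSpan K L (K ∙ x) (K ∙ y) :=
      (Submodule.span_singleton_le_iff_mem _ _).mpr <|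
        lie_mem_adSpan (Submodule.mem_span_singleton_self x) (Submodule.mem_span_singleton_self y)
    exact ⟨m + n, eq_bot_mono (adPow_mono _ hxy) (adPow_adSpan_eq_bot hx hy)⟩

end

/-- Let `S` be a linear subspace of a Lie algebra `L`.  The set `N` of locally
`S`-nilpotent elements `x` (those with `ad(S)^{n+1}(x) = 0` for some `n`) is a
Lie subalgebra of `L`. -/
theorem locallyNilpotent_is_lieSubalgebra (S : Submodule K L) :
    ∃ N : LieSubalgebra K L,
      (N : Set L)
        = {x : L | ∃ n : ℕ, adPow K L S (n + 1) (Submodule.span K {x}) = ⊥} :=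
  ⟨locallyNilpotentSubalgebra S, Set.ext fun _ =>
    ⟨fun ⟨n, h⟩ => ⟨n, adPow_eq_bot_of_le n.le_succ h⟩, fun ⟨n, h⟩ => ⟨n + 1, h⟩⟩⟩
end

section
/- Let L be a Z^n-graded Lie algebra over a field K and M a Z^n-graded L-module that is simple as a graded module (no nonzero proper graded submodules) but not simple as a module. Then there exists an invertible L-module endomorphism θ of M that is homogeneous of degree p for some nonzero p ∈ Z^n. -/
/-!
Pick a nonzero `v` in a proper Lie submodule `N` whose homogeneous support is as small as
possible. Its support contains two degrees `c ≠ d`, because a nonzero homogeneous element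
generates a graded submodule, hence all of `M`. If a homogeneous operator `T` of the
associative algebra generated by the action kills `v_c`, then `T v ∈ N` has smaller support,
so `T v = 0` and `T` kills `v_d` too; splitting an arbitrary operator into homogeneous parts
gives `Ann(v_c) ⊆ Ann(v_d)`. Hence `T v_c ↦ T v_d` is a well-defined endomorphism `θ` of
the `L`-module `M`, homogeneous of degree `d - c`. It is onto because `v_d` is cyclic, and
one-to-one because its kernel is a graded submodule not containing `v_c`.
-/

open DirectSum

section

variable {K L M ι : Type*} [CommRing K] [LieRing L] [AddCommGroup M] [Module K M]
  [LieRingModule L M]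

section ActionAlgebra

variable [LieAlgebra K L] [LieModule K L M]

variable (K L M) in
/-- The image of the universal enveloping algebra of `L` in `Module.End K M`; annihilators
of vectors are taken in it. -/
def actionAlgebra : Subalgebra K (Module.End K M) :=
  Algebra.adjoin K (Set.range (LieModule.toEnd K L M))

theorem toEnd_mem_actionAlgebra (y : L) : LieModule.toEnd K L M y ∈ actionAlgebra K L M :=
  Algebra.subset_adjoin ⟨y, rfl⟩

theorem LieSubmodule.apply_mem_of_mem_actionAlgebra (P : LieSubmodule K L M) {T : Module.End K M}
    (hT : T ∈ actionAlgebra K L M) {z : M} (hz : z ∈ P) : T z ∈ P := by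
  let S : Subalgebra K (Module.End K M) :=
    (Submodule.compatibleMaps (P : Submodule K M) P).toSubalgebra (fun _ h => h)
      fun _ _ hf hg _ h => hf (hg h)
  have hAS : actionAlgebra K L M ≤ S := Algebra.adjoin_le <| by
    rintro _ ⟨y, rfl⟩ z hz
    exact P.lie_mem hz
  exact hAS hT hz

variable (K L) in
def cyclicLieSubmodule (x : M) : LieSubmodule K L M where
  toSubmodule := (actionAlgebra K L M).toSubmodule.map (LinearMap.applyₗ x)
  lie_mem := by
    rintro y _ ⟨T, hT, rfl⟩
    exact ⟨_, (actionAlgebra K L M).mul_mem (toEnd_mem_actionAlgebra y) hT, rfl⟩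

theorem mem_cyclicLieSubmodule {x z : M} :
    z ∈ cyclicLieSubmodule K L x ↔ ∃ T ∈ actionAlgebra K L M, T x = z :=
  Iff.rfl

theorem self_mem_cyclicLieSubmodule (x : M) : x ∈ cyclicLieSubmodule K L x :=
  ⟨1, (actionAlgebra K L M).one_mem, rfl⟩

theorem exists_lieModuleHom_of_annihilator_le {x y : M}
    (hx : ∀ z, ∃ T ∈ actionAlgebra K L M, T x = z)
    (hxy : ∀ T ∈ actionAlgebra K L M, T x = 0 → T y = 0) :
    ∃ θ : M →ₗ⁅K,L⁆ M, ∀ T ∈ actionAlgebra K L M, θ (T x) = T y := by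
  let evalAt (u : M) : actionAlgebra K L M →ₗ[K] M :=
    LinearMap.applyₗ u ∘ₗ (actionAlgebra K L M).val.toLinearMap
  have hsurj : Function.Surjective (evalAt x) := fun z =>
    let ⟨T, hT, hTz⟩ := hx z; ⟨⟨T, hT⟩, hTz⟩
  let θ₀ : M →ₗ[K] M :=
    (LinearMap.ker (evalAt x)).liftQ (evalAt y)
        (fun T hT => LinearMap.mem_ker.2 (hxy T T.2 (LinearMap.mem_ker.1 hT))) ∘ₗ
      ((evalAt x).quotKerEquivOfSurjective hsurj).symm
  have hθ₀ : ∀ T ∈ actionAlgebra K L M, θ₀ (T x) = T y := fun T hT => by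
    change θ₀ (evalAt x ⟨T, hT⟩) = evalAt y ⟨T, hT⟩
    simp only [θ₀, LinearMap.comp_apply, LinearEquiv.coe_coe,
      LinearMap.quotKerEquivOfSurjective_symm_apply, Submodule.liftQ_apply]
  refine ⟨{ θ₀ with map_lie' := fun {u z} => ?_ }, hθ₀⟩
  obtain ⟨T, hT, rfl⟩ := hx z
  have hmul := mul_mem (toEnd_mem_actionAlgebra (L := L) u) hT
  simpa [hθ₀ T hT] using hθ₀ _ hmul

end ActionAlgebra

section Graded

variable [LieAlgebra K L] [Add ι] {Lcomp : ι → Submodule K L} {Mcomp : ι → Submodule K M}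

variable (Lcomp Mcomp) in
def IsGradedAction : Prop :=
  ∀ a b, ∀ y ∈ Lcomp a, ∀ v ∈ Mcomp b, ⁅y, v⁆ ∈ Mcomp (a + b)

variable (Mcomp) in
def LieSubmodule.IsGraded (N : LieSubmodule K L M) : Prop :=
  (N : Submodule K M) = ⨆ g, (N : Submodule K M) ⊓ Mcomp g

def LieSubmodule.homogeneousCore (hL : ⨆ a, Lcomp a = ⊤) (hact : IsGradedAction Lcomp Mcomp)
    (P : LieSubmodule K L M) : LieSubmodule K L M where
  toSubmodule := ⨆ g, (P : Submodule K M) ⊓ Mcomp g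
  lie_mem {y} := by
    have hy : y ∈ ⨆ a, Lcomp a := hL ▸ Submodule.mem_top
    intro z (hz : z ∈ ⨆ g, (P : Submodule K M) ⊓ Mcomp g)
    change ⁅y, z⁆ ∈ ⨆ g, (P : Submodule K M) ⊓ Mcomp g
    induction hz using Submodule.iSup_induction' with
    | mem g z hz =>
      induction hy using Submodule.iSup_induction' with
      | mem a y hy =>
        exact Submodule.mem_iSup_of_mem (a + g) ⟨P.lie_mem hz.1, hact a g y hy z hz.2⟩
      | zero => simp
      | add y₁ y₂ _ _ h₁ h₂ => rw [add_lie]; exact add_mem h₁ h₂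
    | zero => simp
    | add z₁ z₂ _ _ h₁ h₂ => rw [lie_add]; exact add_mem h₁ h₂

namespace LieSubmodule

section

variable (hL : ⨆ a, Lcomp a = ⊤) (hact : IsGradedAction Lcomp Mcomp) (P : LieSubmodule K L M)

theorem homogeneousCore_le : P.homogeneousCore hL hact ≤ P :=
  (toSubmodule_le_toSubmodule _ _).1 <| iSup_le fun _ => inf_le_left

theorem isGraded_homogeneousCore : (P.homogeneousCore hL hact).IsGraded Mcomp :=
  le_antisymm (iSup_mono fun g => le_inf (le_iSup (fun g => (P : Submodule K M) ⊓ Mcomp g) g)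
    inf_le_right) (iSup_le fun _ => inf_le_left)

theorem mem_homogeneousCore {z : M} {g : ι} (hzP : z ∈ P) (hz : z ∈ Mcomp g) :
    z ∈ P.homogeneousCore hL hact :=
  Submodule.mem_iSup_of_mem g ⟨hzP, hz⟩

end

theorem eq_top_of_homogeneous_mem (hL : ⨆ a, Lcomp a = ⊤) (hact : IsGradedAction Lcomp Mcomp)
    (hsimple : ∀ N : LieSubmodule K L M, N.IsGraded Mcomp → N = ⊥ ∨ N = ⊤)
    {P : LieSubmodule K L M} {z : M} {g : ι} (hzP : z ∈ P) (hz : z ∈ Mcomp g) (hz0 : z ≠ 0) :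
    P = ⊤ := by
  obtain hbot | htop := hsimple _ (P.isGraded_homogeneousCore hL hact)
  · exact absurd ((LieSubmodule.mem_bot z).1 (hbot ▸ P.mem_homogeneousCore hL hact hzP hz)) hz0
  · exact top_le_iff.1 (htop ▸ P.homogeneousCore_le hL hact)

end LieSubmodule

theorem exists_mem_actionAlgebra_apply_eq_of_homogeneous [LieModule K L M]
    (hL : ⨆ a, Lcomp a = ⊤) (hact : IsGradedAction Lcomp Mcomp)
    (hsimple : ∀ N : LieSubmodule K L M, N.IsGraded Mcomp → N = ⊥ ∨ N = ⊤)
    {u : M} {g : ι} (hu : u ∈ Mcomp g) (hu0 : u ≠ 0) (z : M) :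
    ∃ T ∈ actionAlgebra K L M, T u = z := by
  have htop := LieSubmodule.eq_top_of_homogeneous_mem hL hact hsimple
    (self_mem_cyclicLieSubmodule u) hu hu0
  exact mem_cyclicLieSubmodule.1 (htop ▸ LieSubmodule.mem_top z)

end Graded

section HomogeneousEnd

variable [AddCommMonoid ι] (Mcomp : ι → Submodule K M)

def homogeneousEnd (a : ι) : Submodule K (Module.End K M) :=
  ⨅ g, (Mcomp g).compatibleMaps (Mcomp (g + a))

variable {Mcomp}

theorem mem_homogeneousEnd {T : Module.End K M} {a : ι} :
    T ∈ homogeneousEnd Mcomp a ↔ ∀ g, ∀ u ∈ Mcomp g, T u ∈ Mcomp (g + a) := by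
  simp only [homogeneousEnd, Submodule.mem_iInf]
  rfl

theorem mul_mem_homogeneousEnd {S T : Module.End K M} {a b : ι}
    (hS : S ∈ homogeneousEnd Mcomp a) (hT : T ∈ homogeneousEnd Mcomp b) :
    S * T ∈ homogeneousEnd Mcomp (a + b) := by
  rw [mem_homogeneousEnd] at *
  intro g u hu
  simpa [add_comm a, ← add_assoc] using hS _ _ (hT g u hu)

theorem one_mem_homogeneousEnd_zero : (1 : Module.End K M) ∈ homogeneousEnd Mcomp 0 :=
  mem_homogeneousEnd.2 fun g u hu => by simpa using hu

variable [LieAlgebra K L] [LieModule K L M] {Lcomp : ι → Submodule K L}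

theorem toEnd_mem_homogeneousEnd (hact : IsGradedAction Lcomp Mcomp) {a : ι} {y : L}
    (hy : y ∈ Lcomp a) : LieModule.toEnd K L M y ∈ homogeneousEnd Mcomp a :=
  mem_homogeneousEnd.2 fun g u hu => by simpa [add_comm a] using hact a g y hy u hu

theorem actionAlgebra_le_iSup_homogeneousEnd (hL : ⨆ a, Lcomp a = ⊤)
    (hact : IsGradedAction Lcomp Mcomp) :
    Subalgebra.toSubmodule (actionAlgebra K L M) ≤
      ⨆ a, Subalgebra.toSubmodule (actionAlgebra K L M) ⊓ homogeneousEnd Mcomp a := by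
  set C := ⨆ a, Subalgebra.toSubmodule (actionAlgebra K L M) ⊓ homogeneousEnd Mcomp a
  have hmul : C * C ≤ C := by
    simp only [C, Submodule.iSup_mul, Submodule.mul_iSup]
    refine iSup_le fun _ => iSup_le fun _ => Submodule.mul_le.2 fun S hS T hT => ?_
    exact Submodule.mem_iSup_of_mem _
      ⟨(actionAlgebra K L M).mul_mem hS.1 hT.1, mul_mem_homogeneousEnd hS.2 hT.2⟩
  have hone : (1 : Module.End K M) ∈ C :=
    Submodule.mem_iSup_of_mem 0 ⟨(actionAlgebra K L M).one_mem, one_mem_homogeneousEnd_zero⟩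
  have hgen : Set.range (LieModule.toEnd K L M) ⊆ C := by
    have hle : ⨆ a, Lcomp a ≤ C.comap (LieModule.toEnd K L M : L →ₗ[K] Module.End K M) :=
      iSup_le fun a y hy => Submodule.mem_iSup_of_mem a
        ⟨toEnd_mem_actionAlgebra y, toEnd_mem_homogeneousEnd hact hy⟩
    rintro _ ⟨y, rfl⟩
    exact hle (hL ▸ Submodule.mem_top)
  exact Algebra.adjoin_le (S := C.toSubalgebra hone fun _ _ hS hT =>
    hmul (Submodule.mul_mem_mul hS hT)) hgen

end HomogeneousEnd

section Decomposition

variable [AddCancelCommMonoid ι] [DecidableEq ι] {Mcomp : ι → Submodule K M}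
  [Decomposition Mcomp]

theorem decompose_sum_apply_add {s : Finset ι} {x : ι → M} {c : ι}
    (hx : ∀ a, x a ∈ Mcomp (c + a)) (hs : ∀ a ∉ s, x a = 0) (a : ι) :
    (decompose Mcomp (∑ b ∈ s, x b) (c + a) : M) = x a := by
  rw [decompose_sum, DFinsupp.finsetSum_apply, Submodule.coe_sum,
    Finset.sum_eq_single a (fun b _ hba => decompose_of_mem_ne Mcomp (hx b) (by simpa using hba))
      (fun ha => by simp [hs a ha]), decompose_of_mem_same Mcomp (hx a)]

theorem decompose_finsupp_sum_apply {f : ι →₀ Module.End K M}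
    (hf : ∀ a, f a ∈ homogeneousEnd Mcomp a) {u : M} {c : ι} (hu : u ∈ Mcomp c) (a : ι) :
    (decompose Mcomp ((f.sum fun _ S => S) u) (c + a) : M) = f a u := by
  rw [Finsupp.sum, LinearMap.sum_apply]
  exact decompose_sum_apply_add (fun b => mem_homogeneousEnd.1 (hf b) c u hu)
    (fun b hb => by simp [Finsupp.notMem_support_iff.1 hb]) a

theorem annihilator_le_of_forall_homogeneous [LieAlgebra K L] [LieModule K L M]
    {Lcomp : ι → Submodule K L} (hL : ⨆ a, Lcomp a = ⊤) (hact : IsGradedAction Lcomp Mcomp)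
    {x y : M} {c : ι} (hx : x ∈ Mcomp c)
    (hxy : ∀ a, ∀ T ∈ actionAlgebra K L M, T ∈ homogeneousEnd Mcomp a → T x = 0 → T y = 0)
    {T : Module.End K M} (hT : T ∈ actionAlgebra K L M) (hTx : T x = 0) : T y = 0 := by
  obtain ⟨f, hf, rfl⟩ := (Submodule.mem_iSup_iff_exists_finsupp _ _).1
    (actionAlgebra_le_iSup_homogeneousEnd hL hact hT)
  rw [Finsupp.sum, LinearMap.sum_apply]
  refine Finset.sum_eq_zero fun a _ => hxy a _ (hf a).1 (hf a).2 ?_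
  rw [← decompose_finsupp_sum_apply (fun a => (hf a).2) hx, hTx, decompose_zero,
    DirectSum.zero_apply, ZeroMemClass.coe_zero]

theorem LieModuleHom.isGraded_ker {θ : M →ₗ⁅K,L⁆ M} {p : ι}
    (hθ : (θ : Module.End K M) ∈ homogeneousEnd Mcomp p) : θ.ker.IsGraded Mcomp := by
  classical
  refine le_antisymm (fun z hz => ?_) (iSup_le fun _ => inf_le_left)
  rw [← sum_support_decompose Mcomp z]
  refine Submodule.sum_mem _ fun g _ =>
    Submodule.mem_iSup_of_mem g ⟨?_, (decompose Mcomp z g).2⟩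
  have hcomp := decompose_sum_apply_add (s := (decompose Mcomp z).support)
    (x := fun g => θ (decompose Mcomp z g)) (c := p)
    (fun g => add_comm g p ▸ mem_homogeneousEnd.1 hθ g _ (decompose Mcomp z g).2)
    (fun g hg => by simp [DFinsupp.notMem_support_iff.1 hg]) g
  rw [← map_sum, sum_support_decompose, (LieModuleHom.mem_ker).1 hz] at hcomp
  simpa [eq_comm] using hcomp

theorem LieModuleHom.injective_of_mem_homogeneousEnd
    (hsimple : ∀ N : LieSubmodule K L M, N.IsGraded Mcomp → N = ⊥ ∨ N = ⊤)
    {θ : M →ₗ⁅K,L⁆ M} {p : ι} (hθ : (θ : Module.End K M) ∈ homogeneousEnd Mcomp p)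
    (hθ0 : θ ≠ 0) : Function.Injective θ :=
  θ.ker_eq_bot.1 <| (hsimple _ (isGraded_ker hθ)).resolve_right fun htop =>
    hθ0 <| LieModuleHom.ext fun z => θ.mem_ker.1 (htop ▸ LieSubmodule.mem_top z)

end Decomposition

section MinimalSupport

variable [DecidableEq ι] {Mcomp : ι → Submodule K M}

open scoped Classical in
theorem LieSubmodule.exists_ne_zero_forall_card_support_le [Decomposition Mcomp]
    (N : LieSubmodule K L M) (hN : N ≠ ⊥) :
    ∃ v ∈ N, v ≠ 0 ∧ ∀ w ∈ N, w ≠ 0 →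
      (decompose Mcomp v).support.card ≤ (decompose Mcomp w).support.card := by
  set S := {w | w ∈ N ∧ w ≠ 0}
  have hS : S.Nonempty := (Submodule.ne_bot_iff _).1 ((N.toSubmodule_eq_bot).not.2 hN)
  obtain ⟨hvN, hv0⟩ := Function.argminOn_mem (fun w => (decompose Mcomp w).support.card) S hS
  exact ⟨_, hvN, hv0, fun w hwN hw0 =>
    Function.argminOn_le (fun w => (decompose Mcomp w).support.card) S ⟨hwN, hw0⟩⟩

open scoped Classical in
theorem LieSubmodule.one_lt_card_support [AddCommMonoid ι] [Decomposition Mcomp]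
    [LieAlgebra K L] {Lcomp : ι → Submodule K L} (hL : ⨆ a, Lcomp a = ⊤)
    (hact : IsGradedAction Lcomp Mcomp)
    (hsimple : ∀ N : LieSubmodule K L M, N.IsGraded Mcomp → N = ⊥ ∨ N = ⊤)
    {N : LieSubmodule K L M} (hN : N ≠ ⊤) {v : M} (hv : v ∈ N) (hv0 : v ≠ 0) :
    1 < (decompose Mcomp v).support.card := by
  by_contra! hcard
  obtain ⟨g, hg⟩ := Finset.card_le_one_iff_subset_singleton.1 hcard
  have hvg : v ∈ Mcomp g := by
    rw [← sum_support_decompose Mcomp v]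
    exact Submodule.sum_mem _ fun i hi =>
      Finset.mem_singleton.1 (hg hi) ▸ (decompose Mcomp v i).2
  exact hN (eq_top_of_homogeneous_mem hL hact hsimple hv hvg hv0)

open scoped Classical in
theorem apply_decompose_eq_zero_of_minimal [AddCommGroup ι] [Decomposition Mcomp]
    [LieAlgebra K L] [LieModule K L M] {N : LieSubmodule K L M} {v : M} (hv : v ∈ N)
    (hmin : ∀ w ∈ N, w ≠ 0 →
      (decompose Mcomp v).support.card ≤ (decompose Mcomp w).support.card)
    {c : ι} (hc : c ∈ (decompose Mcomp v).support) {a : ι} {T : Module.End K M}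
    (hTA : T ∈ actionAlgebra K L M) (hT : T ∈ homogeneousEnd Mcomp a)
    (hTc : T (decompose Mcomp v c) = 0) (d : ι) : T (decompose Mcomp v d) = 0 := by
  set s := (decompose Mcomp v).support
  have hcomp (h : ι) : (decompose Mcomp (T v) (a + h) : M) = T (decompose Mcomp v h) := by
    conv_lhs => rw [← sum_support_decompose Mcomp v, map_sum]
    exact decompose_sum_apply_add
      (fun g => add_comm g a ▸ mem_homogeneousEnd.1 hT g _ (decompose Mcomp v g).2)
      (fun g hg => by simp [DFinsupp.notMem_support_iff.1 hg]) h
  suffices hTv : T v = 0 by simpa [hTv] using (hcomp d).symm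
  by_contra hTv
  have hsub : (decompose Mcomp (T v)).support ⊆ (s.erase c).image (a + ·) := by
    intro h hh
    have hne : T (decompose Mcomp v (h - a)) ≠ 0 := by
      rw [← hcomp, add_sub_cancel]
      exact fun h0 => DFinsupp.mem_support_iff.1 hh (Subtype.ext h0)
    refine Finset.mem_image.2 ⟨h - a, Finset.mem_erase.2 ⟨?_, ?_⟩, add_sub_cancel _ _⟩
    · rintro rfl
      exact hne hTc
    · by_contra hs
      simp [DFinsupp.notMem_support_iff.1 hs] at hne
  have hle := (hmin _ (N.apply_mem_of_mem_actionAlgebra hTA hv) hTv).trans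
    ((Finset.card_le_card hsub).trans Finset.card_image_le)
  rw [Finset.card_erase_of_mem hc] at hle
  have := Finset.card_pos.2 ⟨c, hc⟩
  omega

theorem mem_homogeneousEnd_of_annihilator_le [AddCommGroup ι] [Decomposition Mcomp]
    [LieAlgebra K L] [LieModule K L M] {Lcomp : ι → Submodule K L} (hL : ⨆ a, Lcomp a = ⊤)
    (hact : IsGradedAction Lcomp Mcomp) {x y : M} {c d : ι} (hx : x ∈ Mcomp c)
    (hy : y ∈ Mcomp d) (hxy : ∀ a, ∀ T ∈ actionAlgebra K L M,
      T ∈ homogeneousEnd Mcomp a → T x = 0 → T y = 0)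
    (hcyc : ∀ z, ∃ T ∈ actionAlgebra K L M, T x = z) {θ : M →ₗ⁅K,L⁆ M}
    (hθ : ∀ T ∈ actionAlgebra K L M, θ (T x) = T y) :
    (θ : Module.End K M) ∈ homogeneousEnd Mcomp (d - c) := by
  refine mem_homogeneousEnd.2 fun g z hz => ?_
  obtain ⟨T, hT, rfl⟩ := hcyc z
  obtain ⟨f, hf, rfl⟩ := (Submodule.mem_iSup_iff_exists_finsupp _ _).1
    (actionAlgebra_le_iSup_homogeneousEnd hL hact hT)
  rw [LieModuleHom.coe_toLinearMap, hθ _ hT, Finsupp.sum, LinearMap.sum_apply]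
  refine Submodule.sum_mem _ fun a _ => ?_
  by_cases hga : c + a = g
  · convert mem_homogeneousEnd.1 (hf a).2 d y hy using 2
    rw [← hga]
    abel
  · rw [hxy a _ (hf a).1 (hf a).2 ?_]
    · exact zero_mem _
    · rw [← decompose_finsupp_sum_apply (fun a => (hf a).2) hx a]
      exact decompose_of_mem_ne Mcomp hz (Ne.symm hga)

end MinimalSupport

end

theorem gradedSimple_not_simple_exists_invertible_homogeneous_endo_general
    (K : Type*) [Field K]
    (L : Type*) [LieRing L] [LieAlgebra K L]
    (M : Type*) [AddCommGroup M] [Module K M] [LieRingModule L M] [LieModule K L M]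
    (n : ℕ)
    (Lcomp : (Fin n → ℤ) → Submodule K L)
    (Mcomp : (Fin n → ℤ) → Submodule K M)
    (hLint : DirectSum.IsInternal Lcomp)
    (hMint : DirectSum.IsInternal Mcomp)
    (hact : ∀ a b : Fin n → ℤ, ∀ x ∈ Lcomp a, ∀ v ∈ Mcomp b, ⁅x, v⁆ ∈ Mcomp (a + b))
    -- `M` is simple as a graded module: every graded Lie submodule is `⊥` or `⊤`,
    -- and `M ≠ 0`.
    (hgradedSimple : ∀ N : LieSubmodule K L M,
      ((N : Submodule K M) = ⨆ g : Fin n → ℤ, ((N : Submodule K M) ⊓ Mcomp g)) →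
        N = ⊥ ∨ N = ⊤)
    -- but `M` is not simple as a module:
    (hnotSimple : ∃ N : LieSubmodule K L M, N ≠ ⊥ ∧ N ≠ ⊤) :
    ∃ θ : M →ₗ[K] M,
      (∀ (x : L) (v : M), θ ⁅x, v⁆ = ⁅x, θ v⁆) ∧
      Function.Bijective θ ∧
      ∃ p : Fin n → ℤ, p ≠ 0 ∧ ∀ g : Fin n → ℤ, ∀ v ∈ Mcomp g, θ v ∈ Mcomp (g + p) := by
  classical
  let _ := hMint.chooseDecomposition
  have hL := hLint.submodule_iSup_eq_top
  have hcyc {u : M} {g} := exists_mem_actionAlgebra_apply_eq_of_homogeneous (u := u) (g := g)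
    hL hact hgradedSimple
  obtain ⟨N, hNbot, hNtop⟩ := hnotSimple
  obtain ⟨v, hvN, hv0, hmin⟩ := N.exists_ne_zero_forall_card_support_le (Mcomp := Mcomp) hNbot
  obtain ⟨c, hc, d, hd, hcd⟩ :=
    Finset.one_lt_card.1 (N.one_lt_card_support hL hact hgradedSimple hNtop hvN hv0)
  have hann a T hTA hT hTx :=
    apply_decompose_eq_zero_of_minimal (a := a) (T := T) hvN hmin hc hTA hT hTx d
  have hx0 : (decompose Mcomp v c : M) ≠ 0 := by simpa using DFinsupp.mem_support_iff.1 hc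
  have hy0 : (decompose Mcomp v d : M) ≠ 0 := by simpa using DFinsupp.mem_support_iff.1 hd
  set x := (decompose Mcomp v c : M)
  set y := (decompose Mcomp v d : M)
  have hx : x ∈ Mcomp c := (decompose Mcomp v c).2
  have hy : y ∈ Mcomp d := (decompose Mcomp v d).2
  obtain ⟨θ, hθ⟩ := exists_lieModuleHom_of_annihilator_le (hcyc hx hx0)
    fun T hT => annihilator_le_of_forall_homogeneous hL hact hx hann hT
  have hθp := mem_homogeneousEnd_of_annihilator_le hL hact hx hy hann (hcyc hx hx0) hθ
  have hθ0 : θ ≠ 0 := by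
    rintro rfl
    exact hy0 (by simpa using (hθ 1 (actionAlgebra K L M).one_mem).symm)
  refine ⟨θ, θ.map_lie,
    ⟨θ.injective_of_mem_homogeneousEnd hgradedSimple hθp hθ0, fun z => ?_⟩,
    d - c, sub_ne_zero.2 hcd.symm, mem_homogeneousEnd.1 hθp⟩
  obtain ⟨T, hT, rfl⟩ := hcyc hy hy0 z
  exact ⟨_, hθ T hT⟩

/-- Let `L` be a `ℤⁿ`-graded Lie algebra over a field `K` and `M` a `ℤⁿ`-graded
`L`-module that is simple as a graded module but not simple as a module.  Then
`M` admits an invertible `L`-module endomorphism which is homogeneous of some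
nonzero degree `p ∈ ℤⁿ`. -/
theorem gradedSimple_not_simple_exists_invertible_homogeneous_endo
    (K : Type*) [Field K]
    (L : Type*) [LieRing L] [LieAlgebra K L]
    (M : Type*) [AddCommGroup M] [Module K M] [LieRingModule L M] [LieModule K L M]
    (n : ℕ)
    (Lcomp : (Fin n → ℤ) → Submodule K L)
    (Mcomp : (Fin n → ℤ) → Submodule K M)
    (hLint : DirectSum.IsInternal Lcomp)
    (hLbr : ∀ a b : Fin n → ℤ, ∀ x ∈ Lcomp a, ∀ y ∈ Lcomp b, ⁅x, y⁆ ∈ Lcomp (a + b))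
    (hMint : DirectSum.IsInternal Mcomp)
    (hact : ∀ a b : Fin n → ℤ, ∀ x ∈ Lcomp a, ∀ v ∈ Mcomp b, ⁅x, v⁆ ∈ Mcomp (a + b))
    -- `M` is simple as a graded module: every graded Lie submodule is `⊥` or `⊤`,
    -- and `M ≠ 0`.
    (hMne : (⊤ : LieSubmodule K L M) ≠ ⊥)
    (hgradedSimple : ∀ N : LieSubmodule K L M,
      ((N : Submodule K M) = ⨆ g : Fin n → ℤ, ((N : Submodule K M) ⊓ Mcomp g)) →
        N = ⊥ ∨ N = ⊤)
    -- but `M` is not simple as a module: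
    (hnotSimple : ∃ N : LieSubmodule K L M, N ≠ ⊥ ∧ N ≠ ⊤) :
    ∃ θ : M →ₗ[K] M,
      (∀ (x : L) (v : M), θ ⁅x, v⁆ = ⁅x, θ v⁆) ∧
      Function.Bijective θ ∧
      ∃ p : Fin n → ℤ, p ≠ 0 ∧ ∀ g : Fin n → ℤ, ∀ v ∈ Mcomp g, θ v ∈ Mcomp (g + p) :=
  gradedSimple_not_simple_exists_invertible_homogeneous_endo_general K L M n Lcomp Mcomp hLint hMint
    hact hgradedSimple hnotSimple
end

section
/- Let G be the Lie algebra over a field K of characteristic 0 generated by five elements h, e₁, e₂, f₁, f₂ subject to the relations [h, eᵢ] = 2eᵢ, [h, fᵢ] = -2fᵢ, [eᵢ, fⱼ] = δ_{ij} h (i, j ∈ {1,2}), with no further relations beyond those making it the maximal Z-graded Lie algebra on this local data (deg eᵢ = 1, deg h = 0, deg fᵢ = -1). Then the Lie subalgebra of G generated by e₁ and e₂ is a free Lie algebra of rank two; in particular G contains a non-abelian free Lie subalgebra. -/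
namespace G2222

variable (K : Type) [Field K] [CharZero K]

/-- The free Lie algebra on the five generators `h, e₁, e₂, f₁, f₂`
(indexed by `0, 1, 2, 3, 4`). -/
abbrev F : Type := FreeLieAlgebra K (Fin 5)

/-- The generators. -/
noncomputable def gen (i : Fin 5) : F K := FreeLieAlgebra.of K i

noncomputable def hgen : F K := gen K 0
noncomputable def e : Fin 2 → F K := fun i => gen K ⟨1 + i, by omega⟩
noncomputable def f : Fin 2 → F K := fun i => gen K ⟨3 + i, by omega⟩

/-- The defining relators `[h,eᵢ] - 2eᵢ`, `[h,fᵢ] + 2fᵢ` and `[eᵢ,fⱼ] - δᵢⱼ h`.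
The Lie algebra `G(²²₂₂)` is the quotient of the free Lie algebra by the ideal
generated by these relators only; since these are exactly the local relations,
the quotient is the maximal `ℤ`-graded Lie algebra on this local data
(`deg eᵢ = 1`, `deg h = 0`, `deg fᵢ = -1`). -/
noncomputable def relators : Set (F K) :=
  {x | ∃ i : Fin 2, x = ⁅hgen K, e K i⁆ - (2 : K) • e K i} ∪
  {x | ∃ i : Fin 2, x = ⁅hgen K, f K i⁆ + (2 : K) • f K i} ∪
  {x | ∃ i j : Fin 2, x = ⁅e K i, f K j⁆ - if i = j then hgen K else 0}

/-- The ideal of relations. -/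
noncomputable def I : LieIdeal K (F K) := LieSubmodule.lieSpan K (F K) (relators K)

/-- `G(²²₂₂)`, the contragredient Lie algebra with Cartan matrix all of whose
entries are `2`: the quotient of the free Lie algebra on `h, e₁, e₂, f₁, f₂`
by the ideal generated by the defining relators. -/
abbrev G : Type := F K ⧸ I K

/-- The images of the generators `e₁, e₂` in `G(²²₂₂)`. -/
noncomputable def E (i : Fin 2) : G K := LieSubmodule.Quotient.mk (N := I K) (e K i)

/-!
Let `G(²²₂₂)` act on the free associative algebra `K⟨x₁, x₂⟩`: `eᵢ` by left multiplication
by `xᵢ`, `h` by twice the degree, and `fⱼ` by the operator determined by `fⱼ 1 = 0` and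
`[eᵢ, fⱼ] = δᵢⱼ h`. The defining relations hold, and on the Lie subalgebra generated by `e₁, e₂`
the action is the canonical map from the free Lie algebra to `K⟨x₁, x₂⟩` followed by left
multiplication. That map is injective (Dynkin–Specht–Wever): followed by the Dynkin map
`x₁ ⋯ xₙ ↦ [x₁, [x₂, …, xₙ]]` it becomes a derivation fixing the generators, hence multiplies
brackets of degree `n` by `n`, and in characteristic zero only `0` is killed by it.
-/

noncomputable section

open FreeLieAlgebra MonoidAlgebra Module

attribute [local instance] LieRing.ofAssociativeRing

section LieAlgebra

variable {R L A : Type*} [CommRing R] [LieRing L] [LieAlgebra R L] [LieRing A] [LieAlgebra R A]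

@[elab_as_elim]
theorem FreeLieAlgebra.induction {X : Type*} {motive : FreeLieAlgebra R X → Prop}
    (of : ∀ x, motive (of R x)) (zero : motive 0)
    (add : ∀ u v, motive u → motive v → motive (u + v))
    (smul : ∀ (c : R) u, motive u → motive (c • u))
    (lie : ∀ u v, motive u → motive v → motive ⁅u, v⁆) (u : FreeLieAlgebra R X) : motive u := by
  let S : LieSubalgebra R (FreeLieAlgebra R X) :=
    { carrier := {u | motive u}
      add_mem' := add _ _
      zero_mem' := zero
      smul_mem' := smul
      lie_mem' := lie _ _ }
  have hS : S.incl.comp (lift R fun x => ⟨FreeLieAlgebra.of R x, of x⟩) = LieHom.id :=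
    hom_ext fun x => by simp
  have hu : ((lift R fun x => (⟨FreeLieAlgebra.of R x, of x⟩ : S)) u : FreeLieAlgebra R X) = u :=
    LieHom.congr_fun hS u
  exact hu ▸ ((lift R fun x => (⟨FreeLieAlgebra.of R x, of x⟩ : S)) u).2

def LieIdeal.mkHom (I : LieIdeal R L) : L →ₗ⁅R⁆ L ⧸ I :=
  { (LieSubmodule.Quotient.mk' I : L →ₗ[R] L ⧸ I) with map_lie' := rfl }

@[simp]
theorem LieIdeal.mkHom_apply (I : LieIdeal R L) (x : L) :
    LieIdeal.mkHom I x = LieSubmodule.Quotient.mk x := rfl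

theorem LieHom.eq_of_mk_eq {I : LieIdeal R L} (f : L →ₗ⁅R⁆ A) (hI : I ≤ f.ker) {x y : L}
    (h : (LieSubmodule.Quotient.mk x : L ⧸ I) = LieSubmodule.Quotient.mk y) : f x = f y := by
  simpa [sub_eq_zero] using hI ((Submodule.Quotient.eq I.toSubmodule).mp h)

theorem existsUnique_lieHom_lieSpan_of_injective {X : Type*} {s : Set L} (x : X → L)
    (hs : Set.range x = s) (hx : Function.Injective (lift R x)) (a : X → A) :
    ∃! φ : LieSubalgebra.lieSpan R L s →ₗ⁅R⁆ A,
      ∀ i, φ ⟨x i, LieSubalgebra.subset_lieSpan (hs ▸ Set.mem_range_self i)⟩ = a i := by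
  subst hs
  set S := LieSubalgebra.lieSpan R L (Set.range x)
  let ψ : FreeLieAlgebra R X →ₗ⁅R⁆ S :=
    lift R fun i => ⟨x i, LieSubalgebra.subset_lieSpan (Set.mem_range_self i)⟩
  have hψ_of : ∀ i, ψ (of R i) = ⟨x i, LieSubalgebra.subset_lieSpan (Set.mem_range_self i)⟩ :=
    fun i => lift_of_apply _ _
  have hψ : S.incl.comp ψ = lift R x := hom_ext fun i => by simp [ψ]
  have hψ_inj : Function.Injective ψ := by
    intro u v huv
    apply hx
    rw [← hψ, LieHom.comp_apply, LieHom.comp_apply, huv]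
  have hψ_surj : Function.Surjective ψ := by
    rintro ⟨y, hy⟩
    have hS : S ≤ (lift R x).range :=
      LieSubalgebra.lieSpan_le.mpr (by rintro _ ⟨i, rfl⟩; exact ⟨of R i, lift_of_apply _ _⟩)
    obtain ⟨u, rfl⟩ := hS hy
    exact ⟨u, Subtype.ext (LieHom.congr_fun hψ u)⟩
  let e := LieEquiv.ofBijective ψ ⟨hψ_inj, hψ_surj⟩
  have he : ∀ i, e.symm ⟨x i, LieSubalgebra.subset_lieSpan (Set.mem_range_self i)⟩ = of R i :=
    fun i => e.symm_apply_eq.mpr (hψ_of i).symm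
  refine ⟨(lift R a).comp e.symm.toLieHom, fun i => ?_, fun φ hφ => ?_⟩
  · simp [he]
  · have hφψ : φ.comp ψ = lift R a :=
      hom_ext fun i => by rw [LieHom.comp_apply, hψ_of, hφ, lift_of_apply]
    ext y
    obtain ⟨u, rfl⟩ := hψ_surj y
    change φ (ψ u) = lift R a (e.symm (e u))
    rw [e.symm_apply_apply, ← hφψ, LieHom.comp_apply]

end LieAlgebra

section Words

variable (R : Type*) [CommRing R] {X : Type*}

def word (l : List X) : R[FreeMonoid X] := single (FreeMonoid.ofList l) 1

theorem word_append (l l' : List X) : word R (l ++ l') = word R l * word R l' := by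
  simp [word, single_mul_single, FreeMonoid.ofList_append]

theorem word_cons (x : X) (l : List X) : word R (x :: l) = word R [x] * word R l :=
  word_append R [x] l

variable {R} {M : Type*} [AddCommGroup M] [Module R M]

def liftWords (f : List X → M) : R[FreeMonoid X] →ₗ[R] M :=
  (basis (FreeMonoid X) R).constr R (f ∘ FreeMonoid.toList)

@[simp]
theorem liftWords_word (f : List X → M) (l : List X) : liftWords f (word R l) = f l := by
  rw [word, ← basis_apply, liftWords, Module.Basis.constr_basis]
  rfl

theorem linearMap_ext_word {f g : R[FreeMonoid X] →ₗ[R] M}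
    (h : ∀ l, f (word R l) = g (word R l)) : f = g :=
  (basis (FreeMonoid X) R).ext fun w => by simpa [word] using h w.toList

end Words

section Dynkin

variable (R : Type*) [CommRing R] (X : Type*)

variable {X} in
def rightNormedBracket : List X → FreeLieAlgebra R X
  | [] => 0
  | [x] => of R x
  | x :: y :: t => ⁅of R x, rightNormedBracket (y :: t)⁆

def toWordAlgebra : FreeLieAlgebra R X →ₗ⁅R⁆ R[FreeMonoid X] :=
  lift R fun x => word R [x]

def dynkin : R[FreeMonoid X] →ₗ[R] FreeLieAlgebra R X :=
  liftWords (rightNormedBracket R)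

def augmentation : R[FreeMonoid X] →ₐ[R] R :=
  MonoidAlgebra.lift R R (FreeMonoid X) (FreeMonoid.lift fun _ => 0)

variable {R X}

@[simp]
theorem toWordAlgebra_of (x : X) : toWordAlgebra R X (of R x) = word R [x] :=
  lift_of_apply _ _

theorem augmentation_word (l : List X) :
    augmentation R X (word R l) = if l = [] then 1 else 0 := by
  cases l <;> simp [augmentation, word]

theorem augmentation_toWordAlgebra (u : FreeLieAlgebra R X) :
    augmentation R X (toWordAlgebra R X u) = 0 := by
  have h : (augmentation R X).toLieHom.comp (toWordAlgebra R X) = 0 :=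
    hom_ext fun x => by simp [augmentation_word]
  exact LieHom.congr_fun h u

theorem dynkin_word_mul (x : X) (v : R[FreeMonoid X]) :
    dynkin R X (word R [x] * v) = ⁅of R x, dynkin R X v⁆ + augmentation R X v • of R x := by
  have h : dynkin R X ∘ₗ LinearMap.mulLeft R (word R [x]) =
      LieAlgebra.ad R _ (of R x) ∘ₗ dynkin R X +
        (augmentation R X).toLinearMap.smulRight (of R x) := by
    refine linearMap_ext_word fun l => ?_
    rcases l with _ | ⟨y, t⟩ <;> simp [← word_cons, dynkin, rightNormedBracket, augmentation_word]
  exact LinearMap.congr_fun h v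

theorem dynkin_toWordAlgebra_mul (u : FreeLieAlgebra R X) {v : R[FreeMonoid X]}
    (hv : augmentation R X v = 0) :
    dynkin R X (toWordAlgebra R X u * v) = ⁅u, dynkin R X v⁆ := by
  induction u using FreeLieAlgebra.induction generalizing v with
  | of x => rw [toWordAlgebra_of, dynkin_word_mul, hv, zero_smul, add_zero]
  | zero => simp
  | add u w hu hw => simp [add_mul, hu hv, hw hv]
  | smul c u hu => simp [hu hv]
  | lie u w hu hw =>
    have hmul : ∀ u', augmentation R X (toWordAlgebra R X u' * v) = 0 := fun u' => by
      rw [map_mul, hv, mul_zero]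
    rw [LieHom.map_lie, Ring.lie_def, sub_mul, mul_assoc, mul_assoc, map_sub, hu (hmul w),
      hw (hmul u), hu hv, hw hv, lie_lie]

variable (R X) in
def degreeDerivation : LieDerivation R (FreeLieAlgebra R X) (FreeLieAlgebra R X) where
  toLinearMap := dynkin R X ∘ₗ (toWordAlgebra R X : FreeLieAlgebra R X →ₗ[R] R[FreeMonoid X])
  leibniz' u v := by
    simp only [LinearMap.coe_comp, Function.comp_apply, LieHom.coe_toLinearMap, LieHom.map_lie,
      Ring.lie_def, map_sub]
    rw [dynkin_toWordAlgebra_mul u (augmentation_toWordAlgebra v),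
      dynkin_toWordAlgebra_mul v (augmentation_toWordAlgebra u)]

theorem degreeDerivation_apply (u : FreeLieAlgebra R X) :
    degreeDerivation R X u = dynkin R X (toWordAlgebra R X u) := rfl

theorem degreeDerivation_of (x : X) : degreeDerivation R X (of R x) = of R x := by
  simp [degreeDerivation_apply, dynkin, rightNormedBracket]

end Dynkin

section Eigenspaces

open End

variable {R L : Type*} [CommRing R] [LieRing L] [LieAlgebra R L]

theorem LieDerivation.lie_mem_eigenspace_add (D : LieDerivation R L L) {a b : R} {u v : L}
    (hu : u ∈ eigenspace (D : End R L) a) (hv : v ∈ eigenspace (D : End R L) b) :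
    ⁅u, v⁆ ∈ eigenspace (D : End R L) (a + b) := by
  rw [mem_eigenspace_iff] at hu hv ⊢
  rw [LieDerivation.coeFn_coe] at hu hv ⊢
  rw [D.apply_lie_eq_add, hu, hv, lie_smul, smul_lie, add_smul, add_comm]

theorem LieDerivation.lie_mem_iSup_eigenspace_succ (D : LieDerivation R L L) {u v : L}
    (hu : u ∈ ⨆ n : ℕ, eigenspace (D : End R L) (n + 1))
    (hv : v ∈ ⨆ n : ℕ, eigenspace (D : End R L) (n + 1)) :
    ⁅u, v⁆ ∈ ⨆ n : ℕ, eigenspace (D : End R L) (n + 1) := by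
  set P := ⨆ n : ℕ, eigenspace (D : End R L) (n + 1)
  let bracket : L →ₗ[R] L →ₗ[R] L := LieModule.toEnd R L L
  suffices h : Submodule.map₂ bracket P P ≤ P from h (Submodule.apply_mem_map₂ bracket hu hv)
  simp only [P, Submodule.map₂_iSup_left, Submodule.map₂_iSup_right, iSup_le_iff]
  refine fun m n => Submodule.map₂_le.mpr fun u hu v hv => ?_
  have h := LieDerivation.lie_mem_eigenspace_add D hu hv
  rw [show ((n : R) + 1) + ((m : R) + 1) = ((m + n + 1 : ℕ) : R) + 1 by push_cast; ring] at h
  exact Submodule.mem_iSup_of_mem (m + n + 1) h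

end Eigenspaces

section Embedding

open End

variable {R X : Type*} [CommRing R]

theorem mem_iSup_eigenspace_degreeDerivation (u : FreeLieAlgebra R X) :
    u ∈ ⨆ n : ℕ, eigenspace (degreeDerivation R X : End R _) (n + 1) := by
  induction u using FreeLieAlgebra.induction with
  | of x =>
    refine Submodule.mem_iSup_of_mem 0 (mem_eigenspace_iff.mpr ?_)
    simp [degreeDerivation_of]
  | zero => exact zero_mem _
  | add u v hu hv => exact add_mem hu hv
  | smul c u hu => exact Submodule.smul_mem _ c hu
  | lie u v hu hv => exact LieDerivation.lie_mem_iSup_eigenspace_succ _ hu hv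

variable (X) in
theorem toWordAlgebra_injective : Function.Injective (toWordAlgebra K X) := by
  set D : End K (FreeLieAlgebra K X) := (degreeDerivation K X : End K (FreeLieAlgebra K X))
  rw [injective_iff_map_eq_zero]
  intro u hu
  have hker : u ∈ eigenspace D 0 := by
    rw [mem_eigenspace_iff, zero_smul, LieDerivation.coeFn_coe, degreeDerivation_apply, hu,
      map_zero]
  have hpos : (⨆ n : ℕ, eigenspace D (n + 1)) ≤ ⨆ (μ : K) (_ : μ ≠ 0), eigenspace D μ :=
    iSup_le fun n => le_iSup₂_of_le ((n : K) + 1) (Nat.cast_add_one_ne_zero n) le_rfl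
  exact Submodule.disjoint_def.mp (eigenspaces_iSupIndep D 0) u hker
    (hpos (mem_iSup_eigenspace_degreeDerivation u))

end Embedding

section Representation

variable (R : Type*) [CommRing R] {X : Type*}

def actE (i : X) : End R R[FreeMonoid X] := LinearMap.mulLeft R (word R [i])

variable (X) in
def actH : End R R[FreeMonoid X] := liftWords fun l => (2 * l.length : R) • word R l

/-- Forced by `fⱼ 1 = 0` and `fⱼ (xᵢ w) = xᵢ (fⱼ w) - δᵢⱼ h w`, i.e. by `[eᵢ, fⱼ] = δᵢⱼ h`. -/
def lowerWord [DecidableEq X] (j : X) : List X → R[FreeMonoid X]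
  | [] => 0
  | i :: t => word R [i] * lowerWord j t - if i = j then (2 * t.length : R) • word R t else 0

def actF [DecidableEq X] (j : X) : End R R[FreeMonoid X] := liftWords (lowerWord R j)

variable {R}

theorem actE_apply (i : X) (v : R[FreeMonoid X]) : actE R i v = word R [i] * v := rfl

theorem actH_word (l : List X) : actH R X (word R l) = (2 * l.length : R) • word R l :=
  liftWords_word _ l

theorem actF_word [DecidableEq X] (j : X) (l : List X) :
    actF R j (word R l) = lowerWord R j l :=
  liftWords_word _ l

theorem lie_actH_actE (i : X) : ⁅actH R X, actE R i⁆ = (2 : R) • actE R i := by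
  refine linearMap_ext_word fun l => ?_
  simp only [Ring.lie_def, LinearMap.sub_apply, LinearMap.smul_apply, Module.End.mul_apply,
    actE_apply, ← word_cons, actH_word, mul_smul_comm, List.length_cons]
  push_cast
  module

theorem actH_word_mul (i : X) (v : R[FreeMonoid X]) :
    actH R X (word R [i] * v) = word R [i] * actH R X v + (2 : R) • (word R [i] * v) := by
  have h := LinearMap.congr_fun (lie_actH_actE (R := R) i) v
  rw [Ring.lie_def, LinearMap.sub_apply, sub_eq_iff_eq_add'] at h
  exact h

theorem actH_lowerWord [DecidableEq X] (j : X) (l : List X) :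
    actH R X (lowerWord R j l) = (2 * l.length - 2 : R) • lowerWord R j l := by
  induction l with
  | nil => simp [lowerWord]
  | cons i t ih =>
    rw [lowerWord, map_sub, actH_word_mul, ih]
    split_ifs <;> simp only [map_smul, actH_word, map_zero, List.length_cons, mul_smul_comm] <;>
      push_cast <;> module

theorem lie_actH_actF [DecidableEq X] (j : X) :
    ⁅actH R X, actF R j⁆ = -((2 : R) • actF R j) := by
  refine linearMap_ext_word fun l => ?_
  simp only [Ring.lie_def, LinearMap.sub_apply, LinearMap.neg_apply, LinearMap.smul_apply,
    Module.End.mul_apply, actF_word, actH_word, actH_lowerWord, map_smul]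
  module

theorem lie_actE_actF [DecidableEq X] (i j : X) :
    ⁅actE R i, actF R j⁆ = if i = j then actH R X else 0 := by
  refine linearMap_ext_word fun l => ?_
  simp only [Ring.lie_def, LinearMap.sub_apply, Module.End.mul_apply, actE_apply, actF_word,
    ← word_cons]
  rw [lowerWord]
  split_ifs <;> simp [actH_word]

end Representation

section Presentation

variable (K : Type) [Field K]

def rep : F K →ₗ⁅K⁆ End K K[FreeMonoid (Fin 2)] :=
  lift K ![actH K (Fin 2), actE K 0, actE K 1, actF K 0, actF K 1]

theorem rep_hgen : rep K (hgen K) = actH K (Fin 2) := lift_of_apply _ _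

theorem rep_e (i : Fin 2) : rep K (e K i) = actE K i := by
  fin_cases i <;> exact lift_of_apply _ _

theorem rep_f (j : Fin 2) : rep K (f K j) = actF K j := by
  fin_cases j <;> exact lift_of_apply _ _

theorem I_le_ker_rep : I K ≤ (rep K).ker := by
  refine LieSubmodule.lieSpan_le.mpr ?_
  rintro r ((⟨i, rfl⟩ | ⟨j, rfl⟩) | ⟨i, j, rfl⟩) <;> rw [SetLike.mem_coe, LieHom.mem_ker]
  · rw [map_sub, LieHom.map_lie, map_smul, rep_hgen, rep_e, lie_actH_actE, sub_self]
  · rw [map_add, LieHom.map_lie, map_smul, rep_hgen, rep_f, lie_actH_actF, neg_add_cancel]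
  · rw [map_sub, LieHom.map_lie, rep_e, rep_f, lie_actE_actF, apply_ite (rep K), map_zero,
      rep_hgen, sub_self]

theorem rep_comp_lift_e :
    (rep K).comp (lift K (e K)) = (Algebra.lmul K K[FreeMonoid (Fin 2)]).toLieHom.comp
      (toWordAlgebra K (Fin 2)) :=
  hom_ext fun i => by
    rw [LieHom.comp_apply, lift_of_apply, rep_e, LieHom.comp_apply, toWordAlgebra_of]
    rfl

theorem range_E : Set.range (E K) = {E K 0, E K 1} := by
  ext
  simp [Fin.exists_fin_two, eq_comm]

end Presentation

theorem lift_E_injective : Function.Injective (lift K (E K)) := by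
  have hE : lift K (E K) = (LieIdeal.mkHom (I K)).comp (lift K (e K)) :=
    hom_ext fun i => by simp [E]
  intro u v huv
  rw [hE, LieHom.comp_apply, LieHom.comp_apply, LieIdeal.mkHom_apply,
    LieIdeal.mkHom_apply] at huv
  have hrep := LieHom.eq_of_mk_eq (rep K) (I_le_ker_rep K) huv
  rw [← LieHom.comp_apply, ← LieHom.comp_apply, rep_comp_lift_e] at hrep
  exact toWordAlgebra_injective K _ (Algebra.lmul_injective hrep)

end

/-- In `G(²²₂₂)`, the Lie subalgebra generated by `e₁` and `e₂` is a free Lie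
algebra of rank two: every pair of elements of any Lie algebra `A` determines a
unique Lie algebra morphism out of it sending `e₁, e₂` to the given elements.
In particular `G(²²₂₂)` contains a non-abelian free Lie subalgebra. -/
theorem subalgebra_gen_by_e_is_free :
    ∀ (A : Type) [LieRing A] [LieAlgebra K A] (a₁ a₂ : A),
      ∃! φ : (LieSubalgebra.lieSpan K (G K) {E K 0, E K 1}) →ₗ⁅K⁆ A,
        φ ⟨E K 0, LieSubalgebra.subset_lieSpan (Set.mem_insert _ _)⟩ = a₁ ∧
        φ ⟨E K 1, LieSubalgebra.subset_lieSpan (Set.mem_insert_of_mem _ rfl)⟩ = a₂ := by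
  intro A _ _ a₁ a₂
  obtain ⟨φ, hφ, huniq⟩ :=
    existsUnique_lieHom_lieSpan_of_injective (E K) (range_E K) (lift_E_injective K) ![a₁, a₂]
  exact ⟨φ, ⟨hφ 0, hφ 1⟩, fun ψ hψ => huniq ψ (Fin.forall_fin_two.mpr hψ)⟩

end G2222
end

section
/- Let L = ⊕_{n∈Z} L_n be a finitely generated Z-graded Lie algebra over a field K with finite-dimensional components, and M a finitely generated Z-graded L-module. Then M_{≥0} = ⊕_{k≥0} M_k is a finitely generated module over the subalgebra L⁺ = ⊕_{k>0} L_k, given that L⁺ is generated by ⊕_{1≤k≤d} L_k for some d. -/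
/-!
Choose `e` bounding the degrees of a finite generating set of `M`, and put `Q_n = M_n` for
`n ≤ e` and `Q_n = ∑_{1 ≤ k ≤ d} ⁅L_k, Q_{n-k}⁆` for `n > e`. The sum of the `Q_n` is stable under
`L_1, …, L_d`, hence under the Lie algebra `L⁺` they generate, and, by induction on `n` using the
Jacobi identity, under every `L_j` with `j ≤ 0`. So it is an `L`-submodule containing the
generators, i.e. all of `M`; comparing components gives `M_n = ∑_{1 ≤ k ≤ d} ⁅L_k, M_{n-k}⁆` for
`n > e`. Hence `M_{≥ 0}` is generated over `L⁺` by `M_0 ⊕ ⋯ ⊕ M_N` with `N = max e (d - 1)`.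
-/

section GradedLieModule

open Submodule

theorem iSupIndep.eq_of_le_of_iSup_eq_top {ι α : Type*} [CompleteLattice α] [IsModularLattice α]
    {p q : ι → α} (hp : iSupIndep p) (hqp : ∀ i, q i ≤ p i) (hq : ⨆ i, q i = ⊤) (i : ι) :
    q i = p i := by
  refine le_antisymm (hqp i) ?_
  calc p i = (q i ⊔ ⨆ (j) (_ : j ≠ i), q j) ⊓ p i := by
        rw [← iSup_split_single, hq, top_inf_eq]
    _ = q i ⊔ (⨆ (j) (_ : j ≠ i), q j) ⊓ p i := sup_inf_assoc_of_le _ (hqp i)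
    _ ≤ q i ⊔ (⨆ (j) (_ : j ≠ i), p j) ⊓ p i := by gcongr; exact hqp _
    _ = q i := by rw [(hp i).symm.eq_bot, sup_bot_eq]

theorem Submodule.exists_forall_mem_iSup_le_of_iSup_eq_top {R M ι : Type*} [Semiring R]
    [AddCommMonoid M] [Module R M] [Preorder ι] [IsDirectedOrder ι] [Nonempty ι]
    {p : ι → Submodule R M} (hp : ⨆ i, p i = ⊤) (S : Finset M) :
    ∃ e, ∀ s ∈ S, s ∈ ⨆ (i) (_ : i ≤ e), p i := by
  classical
  have hfin (s : M) : ∃ F : Finset ι, s ∈ ⨆ i ∈ F, p i :=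
    mem_iSup_iff_exists_finset.1 (hp ▸ mem_top)
  choose F hF using hfin
  obtain ⟨e, he⟩ := (S.biUnion F).exists_le
  exact ⟨e, fun s hs =>
    biSup_mono (f := p) (fun i hi => he i (Finset.mem_biUnion.2 ⟨s, hs, hi⟩)) (hF s)⟩

variable {K L M : Type*} [CommRing K] [LieRing L] [LieAlgebra K L]
  [AddCommGroup M] [Module K M] [LieRingModule L M] [LieModule K L M]

variable (L) in
def Submodule.lieStabilizer (P : Submodule K M) : LieSubalgebra K L where
  carrier := {x | ∀ v ∈ P, ⁅x, v⁆ ∈ P}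
  add_mem' ha hb v hv := by rw [add_lie]; exact add_mem (ha v hv) (hb v hv)
  zero_mem' v _ := by rw [zero_lie]; exact zero_mem P
  smul_mem' c x hx v hv := by rw [smul_lie]; exact smul_mem P c (hx v hv)
  lie_mem' ha hb v hv := by rw [lie_lie]; exact sub_mem (ha _ (hb v hv)) (hb _ (ha v hv))

theorem Submodule.mem_lieStabilizer_iSup {ι : Type*} {Q : ι → Submodule K M} {x : L}
    (h : ∀ i, ∀ v ∈ Q i, ∃ j, ⁅x, v⁆ ∈ Q j) : x ∈ (⨆ i, Q i).lieStabilizer L := by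
  have : ⨆ i, Q i ≤ (⨆ i, Q i).comap (LieModule.toEnd K L M x) := iSup_le fun i v hv =>
    let ⟨j, hj⟩ := h i v hv
    mem_iSup_of_mem j hj
  exact fun v hv => this hv

theorem Submodule.eq_top_of_lieStabilizer_eq_top {P : Submodule K M} {S : Set M}
    (hP : P.lieStabilizer L = ⊤) (hS : LieSubmodule.lieSpan K L S = ⊤) (hSP : S ⊆ P) :
    P = ⊤ := by
  let P' : LieSubmodule K L M :=
    { P with
      lie_mem := fun {x} _ hv => (hP ▸ LieSubalgebra.mem_top x : x ∈ P.lieStabilizer L) _ hv }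
  have : (⊤ : LieSubmodule K L M) ≤ P' := hS ▸ LieSubmodule.lieSpan_le.2 hSP
  exact eq_top_iff.2 fun v _ => this (LieSubmodule.mem_top v)

def bracketSpan (A : Submodule K L) (B : Submodule K M) : Submodule K M :=
  map₂ (LieModule.toEnd K L M : L →ₗ[K] Module.End K M) A B

theorem lie_mem_bracketSpan {A : Submodule K L} {B : Submodule K M} {x : L} {v : M}
    (hx : x ∈ A) (hv : v ∈ B) : ⁅x, v⁆ ∈ bracketSpan A B :=
  apply_mem_map₂ _ hx hv

theorem bracketSpan_le {A : Submodule K L} {B C : Submodule K M}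
    (h : ∀ x ∈ A, ∀ v ∈ B, ⁅x, v⁆ ∈ C) : bracketSpan A B ≤ C :=
  map₂_le.2 h

theorem bracketSpan_mono {A : Submodule K L} {B C : Submodule K M} (h : B ≤ C) :
    bracketSpan A B ≤ bracketSpan A C :=
  map₂_le_map₂_right h

variable (Lcomp : ℤ → Submodule K L) (Mcomp : ℤ → Submodule K M) (d e : ℤ)

/-- `Q_n`: the degree-`n` part of the subspace generated from `M_{≤ e}` by `L_1, …, L_d`. -/
noncomputable def generatedComponent (n : ℤ) : Submodule K M :=
  if n ≤ e then Mcomp n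
  else ⨆ k ∈ Set.Icc 1 d, bracketSpan (Lcomp k) (generatedComponent (n - k))
termination_by (n - e).toNat
decreasing_by simp only [Set.mem_Icc] at *; omega

theorem generatedComponent_of_le {n : ℤ} (h : n ≤ e) :
    generatedComponent Lcomp Mcomp d e n = Mcomp n := by
  rw [generatedComponent, if_pos h]

theorem generatedComponent_of_lt {n : ℤ} (h : e < n) :
    generatedComponent Lcomp Mcomp d e n =
      ⨆ k ∈ Set.Icc 1 d, bracketSpan (Lcomp k) (generatedComponent Lcomp Mcomp d e (n - k)) := by
  rw [generatedComponent, if_neg h.not_ge]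

variable {Lcomp Mcomp d e}

theorem generatedComponent_le
    (hact : ∀ n m : ℤ, ∀ x ∈ Lcomp n, ∀ v ∈ Mcomp m, ⁅x, v⁆ ∈ Mcomp (n + m)) (n : ℤ) :
    generatedComponent Lcomp Mcomp d e n ≤ Mcomp n := by
  rcases le_or_gt n e with h | h
  · exact (generatedComponent_of_le Lcomp Mcomp d e h).le
  rw [generatedComponent_of_lt Lcomp Mcomp d e h]
  refine iSup₂_le fun k hk => bracketSpan_le fun x hx v hv => ?_
  have := hact k (n - k) x hx v (generatedComponent_le hact (n - k) hv)
  rwa [add_sub_cancel] at this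
termination_by (n - e).toNat
decreasing_by simp only [Set.mem_Icc] at *; omega

theorem lie_mem_generatedComponent_add
    (hact : ∀ n m : ℤ, ∀ x ∈ Lcomp n, ∀ v ∈ Mcomp m, ⁅x, v⁆ ∈ Mcomp (n + m))
    {k n : ℤ} (hk : k ∈ Set.Icc 1 d) {x : L} (hx : x ∈ Lcomp k) {v : M}
    (hv : v ∈ generatedComponent Lcomp Mcomp d e n) :
    ⁅x, v⁆ ∈ generatedComponent Lcomp Mcomp d e (n + k) := by
  rcases le_or_gt (n + k) e with h | h
  · rw [generatedComponent_of_le Lcomp Mcomp d e (by linarith [hk.1])] at hv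
    rw [generatedComponent_of_le Lcomp Mcomp d e h, add_comm]
    exact hact k n x hx v hv
  · rw [generatedComponent_of_lt Lcomp Mcomp d e h]
    refine mem_iSup_of_mem k (mem_iSup_of_mem hk (lie_mem_bracketSpan hx ?_))
    rwa [add_sub_cancel_right]

theorem lie_mem_generatedComponent_add_of_nonpos
    (hLbr : ∀ n m : ℤ, ∀ x ∈ Lcomp n, ∀ y ∈ Lcomp m, ⁅x, y⁆ ∈ Lcomp (n + m))
    (hact : ∀ n m : ℤ, ∀ x ∈ Lcomp n, ∀ v ∈ Mcomp m, ⁅x, v⁆ ∈ Mcomp (n + m))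
    {j : ℤ} (hj : j ≤ 0) {x : L} (hx : x ∈ Lcomp j) (n : ℤ) {v : M}
    (hv : v ∈ generatedComponent Lcomp Mcomp d e n) :
    ⁅x, v⁆ ∈ generatedComponent Lcomp Mcomp d e (n + j) := by
  rcases le_or_gt n e with h | h
  · rw [generatedComponent_of_le Lcomp Mcomp d e h] at hv
    rw [generatedComponent_of_le Lcomp Mcomp d e (by omega), add_comm]
    exact hact j n x hx v hv
  rw [generatedComponent_of_lt Lcomp Mcomp d e h] at hv
  suffices ⨆ k ∈ Set.Icc 1 d, bracketSpan (Lcomp k) (generatedComponent Lcomp Mcomp d e (n - k)) ≤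
      (generatedComponent Lcomp Mcomp d e (n + j)).comap (LieModule.toEnd K L M x) from this hv
  refine iSup₂_le fun k hk => bracketSpan_le fun y hy w hw => ?_
  -- Jacobi: `⁅x, ⁅y, w⁆⁆ = ⁅⁅x, y⁆, w⁆ + ⁅y, ⁅x, w⁆⁆`, where `⁅x, y⁆` has degree `j + k ≤ d`.
  rw [mem_comap, LieModule.toEnd_apply_apply, leibniz_lie]
  refine add_mem ?_ ?_
  · have hxy := hLbr j k x hx y hy
    have := if hjk : j + k ≤ 0 then
        lie_mem_generatedComponent_add_of_nonpos hLbr hact hjk hxy (n - k) hw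
      else lie_mem_generatedComponent_add hact ⟨by omega, by linarith [hk.2]⟩ hxy hw
    rwa [sub_add_add_cancel] at this
  · have := lie_mem_generatedComponent_add hact hk hy
      (lie_mem_generatedComponent_add_of_nonpos hLbr hact hj hx (n - k) hw)
    rwa [sub_add_eq_add_sub, sub_add_cancel] at this
termination_by (n - e).toNat
decreasing_by all_goals simp only [Set.mem_Icc] at *; omega

theorem LieSubalgebra.eq_top_of_components_le (H : LieSubalgebra K L)
    (hL : ⨆ n, Lcomp n = ⊤)
    (hgen : ⨆ k > (0 : ℤ), Lcomp k ≤
      (LieSubalgebra.lieSpan K L (⨆ k ∈ Set.Icc 1 d, Lcomp k : Submodule K L)).toSubmodule)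
    (hH : ∀ j, j ≤ 0 ∨ j ∈ Set.Icc 1 d → Lcomp j ≤ H.toSubmodule) : H = ⊤ := by
  have hpos (j : ℤ) (hj : 0 < j) : Lcomp j ≤ H.toSubmodule := by
    have hspan : LieSubalgebra.lieSpan K L (⨆ k ∈ Set.Icc 1 d, Lcomp k : Submodule K L) ≤ H :=
      LieSubalgebra.lieSpan_le.2 (iSup₂_le fun k hk => hH k (Or.inr hk))
    intro x hx
    exact hspan (hgen (mem_iSup_of_mem j (mem_iSup_of_mem hj hx)))
  rw [eq_top_iff, ← LieSubalgebra.toSubmodule_le_toSubmodule, LieSubalgebra.top_toSubmodule, ← hL]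
  exact iSup_le fun j => (le_or_gt j 0).elim (fun hj => hH j (Or.inl hj)) (hpos j)

theorem generatedComponent_eq
    (hLbr : ∀ n m : ℤ, ∀ x ∈ Lcomp n, ∀ y ∈ Lcomp m, ⁅x, y⁆ ∈ Lcomp (n + m))
    (hact : ∀ n m : ℤ, ∀ x ∈ Lcomp n, ∀ v ∈ Mcomp m, ⁅x, v⁆ ∈ Mcomp (n + m))
    (hL : ⨆ n, Lcomp n = ⊤) (hM : iSupIndep Mcomp)
    (hgen : ⨆ k > (0 : ℤ), Lcomp k ≤
      (LieSubalgebra.lieSpan K L (⨆ k ∈ Set.Icc 1 d, Lcomp k : Submodule K L)).toSubmodule)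
    {S : Set M} (hS : LieSubmodule.lieSpan K L S = ⊤)
    (hSe : ∀ s ∈ S, s ∈ ⨆ (n) (_ : n ≤ e), Mcomp n) (n : ℤ) :
    generatedComponent Lcomp Mcomp d e n = Mcomp n := by
  set P := ⨆ n, generatedComponent Lcomp Mcomp d e n
  have hstab : P.lieStabilizer L = ⊤ := by
    refine LieSubalgebra.eq_top_of_components_le _ hL hgen fun j hj x hx =>
      mem_lieStabilizer_iSup fun n v hv => ⟨n + j, ?_⟩
    rcases hj with hj | hj
    · exact lie_mem_generatedComponent_add_of_nonpos hLbr hact hj hx n hv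
    · exact lie_mem_generatedComponent_add hact hj hx hv
  have hSP : S ⊆ P := fun s hs =>
    iSup₂_le (fun m hm => (generatedComponent_of_le Lcomp Mcomp d e hm).ge.trans (le_iSup _ m))
      (hSe s hs)
  exact hM.eq_of_le_of_iSup_eq_top (generatedComponent_le hact)
    (eq_top_of_lieStabilizer_eq_top hstab hS hSP) n

theorem component_le_iSup_bracketSpan
    (hLbr : ∀ n m : ℤ, ∀ x ∈ Lcomp n, ∀ y ∈ Lcomp m, ⁅x, y⁆ ∈ Lcomp (n + m))
    (hact : ∀ n m : ℤ, ∀ x ∈ Lcomp n, ∀ v ∈ Mcomp m, ⁅x, v⁆ ∈ Mcomp (n + m))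
    (hL : ⨆ n, Lcomp n = ⊤) (hM : iSupIndep Mcomp)
    (hgen : ⨆ k > (0 : ℤ), Lcomp k ≤
      (LieSubalgebra.lieSpan K L (⨆ k ∈ Set.Icc 1 d, Lcomp k : Submodule K L)).toSubmodule)
    {S : Set M} (hS : LieSubmodule.lieSpan K L S = ⊤)
    (hSe : ∀ s ∈ S, s ∈ ⨆ (n) (_ : n ≤ e), Mcomp n) {n : ℤ} (hn : e < n) :
    Mcomp n ≤ ⨆ k ∈ Set.Icc 1 d, bracketSpan (Lcomp k) (Mcomp (n - k)) := by
  rw [← generatedComponent_eq hLbr hact hL hM hgen hS hSe n, generatedComponent_of_lt _ _ _ _ hn]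
  exact iSup₂_mono fun k _ => bracketSpan_mono (generatedComponent_le hact _)

theorem component_le_of_le_iSup_bracketSpan {W : Submodule K M} {N : ℤ} (hdN : d ≤ N + 1)
    (hstep : ∀ n, N < n → Mcomp n ≤ ⨆ k ∈ Set.Icc 1 d, bracketSpan (Lcomp k) (Mcomp (n - k)))
    (hW : ∀ k ∈ Set.Icc 1 d, ∀ x ∈ Lcomp k, ∀ w ∈ W, ⁅x, w⁆ ∈ W)
    (hbase : ∀ n ∈ Set.Icc 0 N, Mcomp n ≤ W) (n : ℤ) (hn : 0 ≤ n) : Mcomp n ≤ W := by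
  rcases le_or_gt n N with hnN | hnN
  · exact hbase n ⟨hn, hnN⟩
  refine (hstep n hnN).trans <| iSup₂_le fun k hk => bracketSpan_le fun x hx w hw =>
    hW k hk x hx w (component_le_of_le_iSup_bracketSpan hdN hstep hW hbase (n - k) ?_ hw)
  linarith [hk.2]
termination_by n.toNat
decreasing_by simp only [Set.mem_Icc] at *; omega

end GradedLieModule

theorem nonnegativePart_finitelyGenerated_over_positivePart_general
    (K : Type*) [Field K]
    (L : Type*) [LieRing L] [LieAlgebra K L]
    (M : Type*) [AddCommGroup M] [Module K M] [LieRingModule L M] [LieModule K L M]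
    (Lcomp : ℤ → Submodule K L) (Mcomp : ℤ → Submodule K M)
    (hLint : DirectSum.IsInternal Lcomp)
    (hLbr : ∀ n m : ℤ, ∀ x ∈ Lcomp n, ∀ y ∈ Lcomp m, ⁅x, y⁆ ∈ Lcomp (n + m))
    (hMint : DirectSum.IsInternal Mcomp)
    (hact : ∀ n m : ℤ, ∀ x ∈ Lcomp n, ∀ v ∈ Mcomp m, ⁅x, v⁆ ∈ Mcomp (n + m))
    (hMfd : ∀ n : ℤ, FiniteDimensional K (Mcomp n))
    (hMfg : ∃ S : Finset M, LieSubmodule.lieSpan K L (↑S : Set M) = ⊤)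
    (d : ℤ)
    (hgen : ((LieSubalgebra.lieSpan K L
        ((⨆ k ∈ Set.Icc (1 : ℤ) d, Lcomp k : Submodule K L) : Set L)
          : LieSubalgebra K L) : Set L)
      = ((⨆ k > (0 : ℤ), Lcomp k : Submodule K L) : Set L)) :
    ∃ T : Finset M,
      (↑T : Set M) ⊆ ((⨆ k ≥ (0 : ℤ), Mcomp k : Submodule K M) : Set M) ∧
      ∀ W : Submodule K M, (↑T : Set M) ⊆ (W : Set M) →
        (∀ x ∈ (⨆ k > (0 : ℤ), Lcomp k : Submodule K L), ∀ w ∈ W, ⁅x, w⁆ ∈ W) →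
        (⨆ k ≥ (0 : ℤ), Mcomp k : Submodule K M) ≤ W := by
  obtain ⟨S, hS⟩ := hMfg
  obtain ⟨e, he⟩ :=
    Submodule.exists_forall_mem_iSup_le_of_iSup_eq_top hMint.submodule_iSup_eq_top S
  set N := max e (d - 1)
  have hstep (n : ℤ) (hn : N < n) :
      Mcomp n ≤ ⨆ k ∈ Set.Icc 1 d, bracketSpan (Lcomp k) (Mcomp (n - k)) :=
    component_le_iSup_bracketSpan hLbr hact hLint.submodule_iSup_eq_top
      hMint.submodule_iSupIndep hgen.ge hS he (lt_of_le_of_lt (le_max_left _ _) hn)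
  obtain ⟨T, hT⟩ := (Submodule.fg_iff_finiteDimensional ((Finset.Icc 0 N).sup Mcomp)).2
    (Submodule.finiteDimensional_finset_sup _ _)
  refine ⟨T, fun t ht => ?_, fun W hTW hW => iSup₂_le fun n hn => ?_⟩
  · exact (hT ▸ Finset.sup_le fun n hn => le_iSup₂_of_le n (Finset.mem_Icc.1 hn).1 le_rfl :
      Submodule.span K (T : Set M) ≤ ⨆ k ≥ (0 : ℤ), Mcomp k) (Submodule.subset_span ht)
  · have hWstab (k : ℤ) (hk : k ∈ Set.Icc 1 d) (x : L) (hx : x ∈ Lcomp k) (w : M) (hw : w ∈ W) :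
        ⁅x, w⁆ ∈ W :=
      hW x (Submodule.mem_iSup_of_mem k (Submodule.mem_iSup_of_mem (by linarith [hk.1]) hx)) w hw
    exact component_le_of_le_iSup_bracketSpan (by omega) hstep hWstab
      (fun n hn => (Finset.le_sup (Finset.mem_Icc.2 hn)).trans (hT ▸ Submodule.span_le.2 hTW)) n hn

/-- Let `L = ⊕ₙ Lₙ` be a finitely generated `ℤ`-graded Lie algebra with
finite-dimensional components over a field `K`, and `M` a finitely generated
`ℤ`-graded `L`-module with finite-dimensional components.  Assume the positive
part `L⁺ = ⊕_{k>0} L_k` is generated, as a Lie algebra, by `⊕_{1 ≤ k ≤ d} L_k`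
for some `d`.  Then `M_{≥0} = ⊕_{k ≥ 0} M_k` is finitely generated over `L⁺`:
there is a finite subset `T` of `M_{≥0}` such that every `K`-subspace of `M`
containing `T` and stable under bracketing with `L⁺` contains `M_{≥0}`. -/
theorem nonnegativePart_finitelyGenerated_over_positivePart
    (K : Type*) [Field K]
    (L : Type*) [LieRing L] [LieAlgebra K L]
    (M : Type*) [AddCommGroup M] [Module K M] [LieRingModule L M] [LieModule K L M]
    (Lcomp : ℤ → Submodule K L) (Mcomp : ℤ → Submodule K M)
    (hLint : DirectSum.IsInternal Lcomp)
    (hLbr : ∀ n m : ℤ, ∀ x ∈ Lcomp n, ∀ y ∈ Lcomp m, ⁅x, y⁆ ∈ Lcomp (n + m))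
    (hMint : DirectSum.IsInternal Mcomp)
    (hact : ∀ n m : ℤ, ∀ x ∈ Lcomp n, ∀ v ∈ Mcomp m, ⁅x, v⁆ ∈ Mcomp (n + m))
    (hLfd : ∀ n : ℤ, FiniteDimensional K (Lcomp n))
    (hMfd : ∀ n : ℤ, FiniteDimensional K (Mcomp n))
    (hLfg : ∃ S : Finset L, LieSubalgebra.lieSpan K L ↑S = ⊤)
    (hMfg : ∃ S : Finset M, LieSubmodule.lieSpan K L (↑S : Set M) = ⊤)
    (d : ℤ) (hd : 0 < d)
    (hgen : ((LieSubalgebra.lieSpan K L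
        ((⨆ k ∈ Set.Icc (1 : ℤ) d, Lcomp k : Submodule K L) : Set L)
          : LieSubalgebra K L) : Set L)
      = ((⨆ k > (0 : ℤ), Lcomp k : Submodule K L) : Set L)) :
    ∃ T : Finset M,
      (↑T : Set M) ⊆ ((⨆ k ≥ (0 : ℤ), Mcomp k : Submodule K M) : Set M) ∧
      ∀ W : Submodule K M, (↑T : Set M) ⊆ (W : Set M) →
        (∀ x ∈ (⨆ k > (0 : ℤ), Lcomp k : Submodule K L), ∀ w ∈ W, ⁅x, w⁆ ∈ W) →
        (⨆ k ≥ (0 : ℤ), Mcomp k : Submodule K M) ≤ W :=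
  nonnegativePart_finitelyGenerated_over_positivePart_general K L M Lcomp Mcomp hLint hLbr hMint
    hact hMfd hMfg d hgen
end
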